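/- arXiv:2006.07131 — 5 statements merged into one kernel-verified Lean document; each statement's English description precedes it below -/
import Mathlib

section
/- Let C, C₁, C₂, … be Archimedean copulas with (normalized, right-continuous at 0) generators φ, φ₁, φ₂, …, and suppose (φ_n) converges pointwise to φ on (0,1]. Then lim_{n→∞} ζ₁(C_n) = ζ₁(C) and lim_{n→∞} r(C_n) = r(C). In other words, within the class of Archimedean copulas both ζ₁ and r are continuous with respect to pointwise convergence of the generators on (0,1]. -/
/-!
Both `ζ₁` and `r` are integrals over `[0,1]²` of a continuous function of
`(K_C(x,[0,y]), y)`, and kernels take values in `[0,1]`, so by dominated convergence it suffices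
that `K_{C_n}(x,[0,y]) → K_C(x,[0,y])` for almost every `(x,y)`.

Pointwise convergence of the convex generators gives `C_n(x,y) → C(x,y)` and
`D⁺φ_n(c_n) → D⁺φ(c)` whenever `c_n → c` and `c` is a continuity point of `D⁺φ`. Off the null
graph of `f⁰` there are two cases. If `y > f⁰(x)`, then `C(x,y) > 0`, and the kernel ratio
converges once `x` and `C(x,y)` are continuity points of `D⁺φ`; this holds almost everywhere
because `D⁺φ` is monotone and `y ↦ C(x,y)` is injective there. If `y < f⁰(x)`, then `C(x,y) = 0`,
while `φ_n(C_n(x,y)) = φ_n(x) + φ_n(y)` stays above `φ(0)`; since `C_n(x,y) → 0`, convexity forces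
`D⁺φ_n(C_n(x,y)) → -∞` and the kernel to `0`.
-/

open MeasureTheory Filter Set
open scoped ENNReal

noncomputable section

/-- Right-hand derivative (of a convex function on `[0,1]`) of `f` at `x`, realized as the
infimum of the forward difference quotients with right endpoint in `(x, 1]`. -/
noncomputable def rightD (f : ℝ → ℝ) (x : ℝ) : ℝ :=
  sInf ((fun y => (f y - f x) / (y - x)) '' Set.Ioc x 1)

/-- `φ : [0,1] → [0,∞]` is a (normalized, right-continuous at `0`) generator of an
Archimedean copula: convex, strictly decreasing, `φ 1 = 0`, finite on `(0,1]`,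
right-continuous at `0` and normalized by `φ (1/2) = 1`. -/
structure IsGenerator (φ : ℝ → ℝ≥0∞) : Prop where
  convex : ∀ x ∈ Set.Icc (0:ℝ) 1, ∀ y ∈ Set.Icc (0:ℝ) 1, ∀ t ∈ Set.Icc (0:ℝ) 1,
    φ (t * x + (1 - t) * y) ≤ ENNReal.ofReal t * φ x + ENNReal.ofReal (1 - t) * φ y
  strict_anti : ∀ x ∈ Set.Icc (0:ℝ) 1, ∀ y ∈ Set.Icc (0:ℝ) 1, x < y → φ y < φ x
  map_one : φ 1 = 0
  finite : ∀ x ∈ Set.Ioc (0:ℝ) 1, φ x < ⊤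
  rightCont_zero : Filter.Tendsto φ (nhdsWithin 0 (Set.Ioi 0)) (nhds (φ 0))
  normalized : φ (1/2) = 1

/-- Pseudo-inverse `φ⁻` of a generator: `φ⁻ s = φ⁻¹ s` for `s < φ 0` and `0` for `s ≥ φ 0`. -/
noncomputable def pseudoInv (φ : ℝ → ℝ≥0∞) (s : ℝ≥0∞) : ℝ :=
  sSup {x | x ∈ Set.Icc (0:ℝ) 1 ∧ s ≤ φ x}

/-- The Archimedean copula generated by `φ`: `C(x,y) = φ⁻(φ x + φ y)`. -/
noncomputable def archCopula (φ : ℝ → ℝ≥0∞) (x y : ℝ) : ℝ :=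
  pseudoInv φ (φ x + φ y)

/-- The right-hand derivative `D⁺φ` of a generator. -/
noncomputable def Dplus (φ : ℝ → ℝ≥0∞) (x : ℝ) : ℝ :=
  rightD (fun t => (φ t).toReal) x

/-- The set `Cont(D⁺φ)` of continuity points of `D⁺φ` in `(0,1)`. -/
def ContD (φ : ℝ → ℝ≥0∞) : Set ℝ :=
  {x | x ∈ Set.Ioo (0:ℝ) 1 ∧ ContinuousAt (Dplus φ) x}

/-- The `t`-level function `f^t(x) = φ⁻(φ t − φ x)` of the Archimedean copula generated
by `φ`. -/
noncomputable def levelFn (φ : ℝ → ℝ≥0∞) (t x : ℝ) : ℝ :=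
  pseudoInv φ (φ t - φ x)

/-- The Kendall distribution function `F^Kendall(x) = x − φ(x)/D⁺φ(x)` of the Archimedean
copula generated by `φ`. -/
noncomputable def kendall (φ : ℝ → ℝ≥0∞) (x : ℝ) : ℝ :=
  x - (φ x).toReal / Dplus φ x

/-- The Markov kernel (as conditional distribution function `(x,y) ↦ K_C(x,[0,y])`) of the
Archimedean copula generated by `φ`. -/
noncomputable def archKernel (φ : ℝ → ℝ≥0∞) (x y : ℝ) : ℝ :=
  if x = 0 ∨ x = 1 then 1
  else if y < levelFn φ 0 x then 0
  else Dplus φ x / Dplus φ (archCopula φ x y)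

/-- The metric `D₁` between two copulas, expressed via their conditional distribution
functions `K₁, K₂` (with `Kᵢ x y = K_{Cᵢ}(x,[0,y])`). -/
noncomputable def D1 (K1 K2 : ℝ → ℝ → ℝ) : ℝ :=
  ∫ y in Set.Icc (0:ℝ) 1, ∫ x in Set.Icc (0:ℝ) 1, |K1 x y - K2 x y|

/-- Conditional distribution function of the independence copula `Π`. -/
def piKernel : ℝ → ℝ → ℝ := fun _ y => y

/-- Dependence measure `ζ₁(C) = 3 D₁(C, Π)`. -/
noncomputable def zeta1 (K : ℝ → ℝ → ℝ) : ℝ := 3 * D1 K piKernel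

/-- Dependence measure `r(C) = 6 ∫∫ K_C(x,[0,y])² dλ(x) dλ(y) − 2`. -/
noncomputable def rdep (K : ℝ → ℝ → ℝ) : ℝ :=
  6 * (∫ y in Set.Icc (0:ℝ) 1, ∫ x in Set.Icc (0:ℝ) 1, (K x y) ^ 2) - 2

/-- Weak conditional convergence of a sequence of copulas, in terms of their conditional
distribution functions: for λ-a.e. `x ∈ [0,1]` the measures `K_{C_n}(x,·)` converge weakly
to `K_C(x,·)`, i.e. the conditional distribution functions converge at every continuity
point of `y ↦ K_C(x,[0,y])` in `[0,1]`. -/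
def WeakCondConv (Kseq : ℕ → ℝ → ℝ → ℝ) (K : ℝ → ℝ → ℝ) : Prop :=
  ∀ᵐ x ∂(volume.restrict (Set.Icc (0:ℝ) 1)),
    ∀ y ∈ Set.Icc (0:ℝ) 1, ContinuousWithinAt (fun t => K x t) (Set.Icc 0 1) y →
      Filter.Tendsto (fun n => Kseq n x y) Filter.atTop (nhds (K x y))


open Topology

section RightDeriv

variable {f : ℝ → ℝ} {u x t c : ℝ}

lemma rightD_le_or_eq_zero (hxt : x < t) (ht : t ≤ 1) :
    rightD f x ≤ (f t - f x) / (t - x) ∨ rightD f x = 0 := by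
  by_cases hb : BddBelow ((fun y => (f y - f x) / (y - x)) '' Ioc x 1)
  · exact .inl (csInf_le hb ⟨t, ⟨hxt, ht⟩, rfl⟩)
  · exact .inr (Real.sInf_of_not_bddBelow hb)

lemma rightD_nonpos (hc : c < 1) (hf : f 1 ≤ f c) : rightD f c ≤ 0 := by
  rcases rightD_le_or_eq_zero (f := f) hc le_rfl with h | h
  · exact h.trans (div_nonpos_of_nonpos_of_nonneg (by linarith) (by linarith))
  · exact h.le

lemma rightD_le_neg_div_or_eq_zero (hc : 0 ≤ c) (hct : c < t) (ht : t ≤ 1) {η : ℝ}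
    (hη : 0 ≤ η) (hgap : f t + η ≤ f c) : rightD f c ≤ -η / t ∨ rightD f c = 0 := by
  refine (rightD_le_or_eq_zero hct ht).imp_left fun h => h.trans ?_
  calc (f t - f c) / (t - c) ≤ -η / (t - c) := by gcongr; linarith
    _ ≤ -η / t := by rw [div_le_div_iff₀ (by linarith) (by linarith)]; nlinarith

lemma ConvexOn.slope_le_slope_of_lt (hf : ConvexOn ℝ (Ioc 0 1) f) (hu : 0 < u) (hux : u < x)
    (hxt : x < t) (ht : t ≤ 1) : (f x - f u) / (x - u) ≤ (f t - f x) / (t - x) :=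
  hf.slope_mono_adjacent ⟨hu, by linarith⟩ ⟨by linarith, ht⟩ hux hxt

lemma ConvexOn.rightD_le_slope (hf : ConvexOn ℝ (Ioc 0 1) f) (hx : 0 < x) (hxt : x < t)
    (ht : t ≤ 1) : rightD f x ≤ (f t - f x) / (t - x) := by
  refine csInf_le ⟨(f x - f (x / 2)) / (x - x / 2), ?_⟩ ⟨t, ⟨hxt, ht⟩, rfl⟩
  rintro _ ⟨s, hs, rfl⟩
  exact hf.slope_le_slope_of_lt (half_pos hx) (half_lt_self hx) hs.1 hs.2

lemma ConvexOn.slope_le_rightD (hf : ConvexOn ℝ (Ioc 0 1) f) (hu : 0 < u) (hux : u < x)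
    (hx : x < 1) : (f x - f u) / (x - u) ≤ rightD f x := by
  refine le_csInf ⟨_, 1, ⟨hx, le_rfl⟩, rfl⟩ ?_
  rintro _ ⟨s, hs, rfl⟩
  exact hf.slope_le_slope_of_lt hu hux hs.1 hs.2

lemma ConvexOn.monotoneOn_rightD (hf : ConvexOn ℝ (Ioc 0 1) f) :
    MonotoneOn (rightD f) (Ioo 0 1) := by
  intro u hu x hx hux
  rcases hux.eq_or_lt with rfl | hlt
  · rfl
  · exact (hf.rightD_le_slope hu.1 hlt hx.2.le).trans (hf.slope_le_rightD hu.1 hlt hx.2)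

lemma ConvexOn.rightD_neg (hf : ConvexOn ℝ (Ioc 0 1) f) (hx : x ∈ Ioo 0 1) (h1 : f 1 < f x) :
    rightD f x < 0 :=
  (hf.rightD_le_slope hx.1 hx.2 le_rfl).trans_lt
    (div_neg_of_neg_of_pos (by linarith) (by linarith [hx.2]))

lemma ConvexOn.countable_not_continuousAt_rightD (hf : ConvexOn ℝ (Ioc 0 1) f) :
    {x ∈ Ioo 0 1 | ¬ContinuousAt (rightD f) x}.Countable := by
  refine hf.monotoneOn_rightD.countable_not_continuousWithinAt.mono ?_
  rintro x ⟨hx, hnc⟩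
  exact ⟨hx, fun h => hnc (h.continuousAt (isOpen_Ioo.mem_nhds hx))⟩

variable {fs : ℕ → ℝ → ℝ}

lemma ConvexOn.exists_eventually_lt_rightD (hfs : ∀ n, ConvexOn ℝ (Ioc 0 1) (fs n))
    (hf : ConvexOn ℝ (Ioc 0 1) f) (hlim : ∀ t ∈ Ioc 0 1, Tendsto (fs · t) atTop (𝓝 (f t)))
    (hx : x ∈ Ioo 0 1) (hcont : ContinuousAt (rightD f) x) {a : ℝ} (ha : a < rightD f x) :
    ∃ v < x, ∀ᶠ n in atTop, ∀ c ∈ Ico v 1, a < rightD (fs n) c := by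
  obtain ⟨u, hau, hu0, hux⟩ : ∃ u, a < rightD f u ∧ u ∈ Ioo 0 x :=
    (((hcont.tendsto.mono_left nhdsWithin_le_nhds).eventually (eventually_gt_nhds ha)).and
      (Ioo_mem_nhdsLT hx.1)).exists
  obtain ⟨v, huv, hvx⟩ := exists_between hux
  refine ⟨v, hvx, ?_⟩
  have hslope : a < (f v - f u) / (v - u) :=
    hau.trans_le (hf.rightD_le_slope hu0 huv (by linarith [hx.2]))
  have hconv : Tendsto (fun n => (fs n v - fs n u) / (v - u)) atTop
      (𝓝 ((f v - f u) / (v - u))) :=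
    ((hlim v ⟨by linarith, by linarith [hx.2]⟩).sub
      (hlim u ⟨hu0, by linarith [hx.2]⟩)).div_const _
  filter_upwards [hconv.eventually (eventually_gt_nhds hslope)] with n hn c hc
  exact hn.trans_le (((hfs n).slope_le_rightD hu0 huv (by linarith [hx.2])).trans
    ((hfs n).monotoneOn_rightD ⟨by linarith, by linarith [hx.2]⟩ ⟨by linarith [hc.1], hc.2⟩ hc.1))

lemma ConvexOn.exists_eventually_rightD_lt (hfs : ∀ n, ConvexOn ℝ (Ioc 0 1) (fs n))
    (hf : ConvexOn ℝ (Ioc 0 1) f) (hlim : ∀ t ∈ Ioc 0 1, Tendsto (fs · t) atTop (𝓝 (f t)))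
    (hx : x ∈ Ioo 0 1) (hcont : ContinuousAt (rightD f) x) {b : ℝ} (hb : rightD f x < b) :
    ∃ w > x, ∀ᶠ n in atTop, ∀ c ∈ Ioc 0 w, rightD (fs n) c < b := by
  obtain ⟨t, htb, hxt, ht1⟩ : ∃ t, rightD f t < b ∧ t ∈ Ioo x 1 :=
    (((hcont.tendsto.mono_left nhdsWithin_le_nhds).eventually (eventually_lt_nhds hb)).and
      (Ioo_mem_nhdsGT hx.2)).exists
  obtain ⟨w, hxw, hwt⟩ := exists_between hxt
  have hw0 : 0 < w := by linarith [hx.1]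
  refine ⟨w, hxw, ?_⟩
  have hslope : (f t - f w) / (t - w) < b := (hf.slope_le_rightD hw0 hwt ht1).trans_lt htb
  have hconv : Tendsto (fun n => (fs n t - fs n w) / (t - w)) atTop
      (𝓝 ((f t - f w) / (t - w))) :=
    ((hlim t ⟨by linarith, ht1.le⟩).sub (hlim w ⟨hw0, by linarith⟩)).div_const _
  filter_upwards [hconv.eventually (eventually_lt_nhds hslope)] with n hn c hc
  exact (((hfs n).monotoneOn_rightD ⟨hc.1, by linarith [hc.2]⟩ ⟨hw0, by linarith⟩ hc.2).trans
    ((hfs n).rightD_le_slope hw0 hwt ht1.le)).trans_lt hn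

lemma ConvexOn.tendsto_rightD (hfs : ∀ n, ConvexOn ℝ (Ioc 0 1) (fs n))
    (hf : ConvexOn ℝ (Ioc 0 1) f) (hlim : ∀ t ∈ Ioc 0 1, Tendsto (fs · t) atTop (𝓝 (f t)))
    (hx : x ∈ Ioo 0 1) (hcont : ContinuousAt (rightD f) x) {cs : ℕ → ℝ}
    (hcs : Tendsto cs atTop (𝓝 x)) :
    Tendsto (fun n => rightD (fs n) (cs n)) atTop (𝓝 (rightD f x)) := by
  refine tendsto_order.2 ⟨fun a ha => ?_, fun b hb => ?_⟩
  · obtain ⟨v, hvx, hv⟩ := exists_eventually_lt_rightD hfs hf hlim hx hcont ha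
    filter_upwards [hv, hcs.eventually (eventually_gt_nhds hvx),
      hcs.eventually (eventually_lt_nhds hx.2)] with n hn h1 h2
    exact hn _ ⟨h1.le, h2⟩
  · obtain ⟨w, hxw, hw⟩ := exists_eventually_rightD_lt hfs hf hlim hx hcont hb
    filter_upwards [hw, hcs.eventually (eventually_gt_nhds hx.1),
      hcs.eventually (eventually_lt_nhds hxw)] with n hn h1 h2
    exact hn _ ⟨h1, h2.le⟩

end RightDeriv

namespace IsGenerator

variable {ψ : ℝ → ℝ≥0∞} {x c : ℝ}

lemma strictAntiOn (h : IsGenerator ψ) : StrictAntiOn ψ (Icc 0 1) :=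
  fun x hx y hy hxy => h.strict_anti x hx y hy hxy

lemma antitoneOn (h : IsGenerator ψ) : AntitoneOn ψ (Icc 0 1) := h.strictAntiOn.antitoneOn

lemma ne_top (h : IsGenerator ψ) (hx : x ∈ Ioc 0 1) : ψ x ≠ ⊤ := (h.finite x hx).ne

lemma pos (h : IsGenerator ψ) (hx : x ∈ Ico 0 1) : 0 < ψ x := by
  simpa [h.map_one] using h.strict_anti x ⟨hx.1, hx.2.le⟩ 1 ⟨zero_le_one, le_rfl⟩ hx.2

lemma convexOn_toReal (h : IsGenerator ψ) : ConvexOn ℝ (Ioc 0 1) fun t => (ψ t).toReal := by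
  refine ⟨convex_Ioc 0 1, fun x hx y hy a b ha hb hab => ?_⟩
  obtain rfl : b = 1 - a := by linarith
  have hax : ENNReal.ofReal a * ψ x ≠ ⊤ := ENNReal.mul_ne_top ENNReal.ofReal_ne_top (h.ne_top hx)
  have hby : ENNReal.ofReal (1 - a) * ψ y ≠ ⊤ :=
    ENNReal.mul_ne_top ENNReal.ofReal_ne_top (h.ne_top hy)
  have key := ENNReal.toReal_mono (ENNReal.add_ne_top.2 ⟨hax, hby⟩)
    (h.convex x (Ioc_subset_Icc_self hx) y (Ioc_subset_Icc_self hy) a ⟨ha, by linarith⟩)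
  rwa [ENNReal.toReal_add hax hby, ENNReal.toReal_mul, ENNReal.toReal_mul,
    ENNReal.toReal_ofReal ha, ENNReal.toReal_ofReal hb] at key

lemma continuousAt (h : IsGenerator ψ) (hx : x ∈ Ioo 0 1) : ContinuousAt ψ x := by
  have hreal : ContinuousAt (fun t => (ψ t).toReal) x :=
    ((h.convexOn_toReal.subset Ioo_subset_Ioc_self (convex_Ioo 0 1)).continuousOn
      isOpen_Ioo).continuousAt (isOpen_Ioo.mem_nhds hx)
  refine (ENNReal.continuous_ofReal.continuousAt.comp hreal).congr ?_
  filter_upwards [isOpen_Ioo.mem_nhds hx] with t ht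
  exact ENNReal.ofReal_toReal (h.ne_top ⟨ht.1, ht.2.le⟩)

lemma exists_toReal_lt (h : IsGenerator ψ) (h0 : ψ 0 ≠ ⊤) {η m : ℝ}
    (hη : 0 < η) (hm : 0 < m) : ∃ t, (ψ t).toReal < (ψ 0).toReal + η ∧ t ∈ Ioo 0 m :=
  ((((ENNReal.tendsto_toReal h0).comp h.rightCont_zero).eventually
    (eventually_lt_nhds (lt_add_of_pos_right _ hη))).and (Ioo_mem_nhdsGT hm)).exists

lemma Dplus_neg (h : IsGenerator ψ) (hx : x ∈ Ioo 0 1) : Dplus ψ x < 0 :=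
  h.convexOn_toReal.rightD_neg hx <| by
    simpa [h.map_one] using
      ENNReal.toReal_pos (h.pos ⟨hx.1.le, hx.2⟩).ne' (h.ne_top ⟨hx.1, hx.2.le⟩)

lemma Dplus_nonpos (h : IsGenerator ψ) (hc : c < 1) : Dplus ψ c ≤ 0 :=
  rightD_nonpos hc (by simp [h.map_one])

lemma div_Dplus_mem_Icc (h : IsGenerator ψ) (hx : x ∈ Ioo 0 1) (hc : c ∈ Ioc 0 x) :
    Dplus ψ x / Dplus ψ c ∈ Icc 0 1 := by
  have hDc : Dplus ψ c ≤ Dplus ψ x :=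
    h.convexOn_toReal.monotoneOn_rightD ⟨hc.1, hc.2.trans_lt hx.2⟩ hx hc.2
  have hDx := h.Dplus_neg hx
  exact ⟨div_nonneg_of_nonpos hDx.le (by linarith), (div_le_one_of_neg (by linarith)).2 hDc⟩

/-- `D⁺ψ(c)` is at most the slope from `c` to `t`, hence `≤ -η / t`, unless it is the junk
value `0` of an unbounded `sInf`; in both cases the bound follows. -/
lemma div_Dplus_le (h : IsGenerator ψ) (hx : x ∈ Ioo 0 1) (hc : 0 ≤ c) {t η : ℝ}
    (hct : c < t) (ht : t ≤ 1) (hη : 0 < η) (hgap : (ψ t).toReal + η ≤ (ψ c).toReal) :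
    Dplus ψ x / Dplus ψ c ≤ -Dplus ψ x * t / η := by
  have hDx := h.Dplus_neg hx
  have ht0 : 0 < t := hc.trans_lt hct
  rcases rightD_le_neg_div_or_eq_zero (f := fun t => (ψ t).toReal) hc hct ht hη.le hgap with
    hD | hD
  · have hD' : η / t ≤ -Dplus ψ c := by
      have : Dplus ψ c ≤ -η / t := hD
      rw [neg_div] at this
      linarith
    have hA : 0 ≤ -Dplus ψ x * t / η := div_nonneg (mul_nonneg (by linarith) ht0.le) hη.le
    have hDc : 0 < -Dplus ψ c := (div_pos hη ht0).trans_le hD'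
    rw [← neg_div_neg_eq, div_le_iff₀ hDc]
    calc -Dplus ψ x = -Dplus ψ x * t / η * (η / t) := by field_simp
      _ ≤ -Dplus ψ x * t / η * -Dplus ψ c := mul_le_mul_of_nonneg_left hD' hA
  · rw [show Dplus ψ c = 0 from hD, div_zero]
    exact div_nonneg (mul_nonneg (by linarith) ht0.le) hη.le

end IsGenerator

section PseudoInverse

variable {ψ : ℝ → ℝ≥0∞} {s : ℝ≥0∞} {z : ℝ}

lemma pseudoInv_nonneg : 0 ≤ pseudoInv ψ s := Real.sSup_nonneg fun _ hx => hx.1.1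

lemma pseudoInv_le_one : pseudoInv ψ s ≤ 1 := Real.sSup_le (fun _ hx => hx.1.2) zero_le_one

lemma le_pseudoInv (hz : z ∈ Icc 0 1) (hs : s ≤ ψ z) : z ≤ pseudoInv ψ s :=
  le_csSup ⟨1, fun _ hx => hx.1.2⟩ ⟨hz, hs⟩

lemma antitone_pseudoInv : Antitone (pseudoInv ψ) := fun _ _ hss' =>
  Real.sSup_le (fun _ hw => le_pseudoInv hw.1 (hss'.trans hw.2)) pseudoInv_nonneg

lemma apply_lt_of_pseudoInv_lt (hz : z ∈ Icc 0 1) (hlt : pseudoInv ψ s < z) : ψ z < s :=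
  lt_of_not_ge fun hs => (le_pseudoInv hz hs).not_gt hlt

namespace IsGenerator

lemma lt_apply_of_lt_pseudoInv (h : IsGenerator ψ) (hz : 0 ≤ z) (hlt : z < pseudoInv ψ s) :
    s < ψ z := by
  have hne : {x | x ∈ Icc (0:ℝ) 1 ∧ s ≤ ψ x}.Nonempty := by
    by_contra hemp
    rw [pseudoInv, not_nonempty_iff_eq_empty.1 hemp, Real.sSup_empty] at hlt
    linarith
  obtain ⟨w, hw, hzw⟩ := exists_lt_of_lt_csSup hne hlt
  exact hw.2.trans_lt (h.strict_anti z ⟨hz, hzw.le.trans hw.1.2⟩ w hw.1 hzw)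

lemma pseudoInv_le (h : IsGenerator ψ) (hz : z ∈ Icc 0 1) (hs : ψ z ≤ s) :
    pseudoInv ψ s ≤ z :=
  le_of_not_gt fun hlt => (h.lt_apply_of_lt_pseudoInv hz.1 hlt).not_ge hs

lemma pseudoInv_eq_zero (h : IsGenerator ψ) (hs : ψ 0 ≤ s) : pseudoInv ψ s = 0 :=
  (h.pseudoInv_le ⟨le_rfl, zero_le_one⟩ hs).antisymm pseudoInv_nonneg

lemma pseudoInv_pos (h : IsGenerator ψ) (hs : s < ψ 0) : 0 < pseudoInv ψ s := by
  obtain ⟨t, hst, ht0, ht1⟩ : ∃ t, s < ψ t ∧ t ∈ Ioo 0 1 :=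
    ((h.rightCont_zero.eventually (eventually_gt_nhds hs)).and (Ioo_mem_nhdsGT one_pos)).exists
  exact ht0.trans_le (le_pseudoInv ⟨ht0.le, ht1.le⟩ hst.le)

/-- For `0 < ψ⁻(s) < 1` this is continuity of `ψ`; at `ψ⁻(s) = 0` it is the bound `s ≤ ψ 0`. -/
lemma apply_pseudoInv (h : IsGenerator ψ) (hs : s ≤ ψ 0) (h1 : pseudoInv ψ s < 1) :
    ψ (pseudoInv ψ s) = s := by
  rcases pseudoInv_nonneg.eq_or_lt with h0 | hpos
  · rw [← h0]
    exact hs.antisymm' (not_lt.1 fun hlt => (h.pseudoInv_pos hlt).ne' h0.symm)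
  have hcont := h.continuousAt ⟨hpos, h1⟩
  set c := pseudoInv ψ s
  refine le_antisymm (le_of_tendsto (hcont.mono_left (nhdsWithin_le_nhds (s := Ioi c))) ?_)
    (ge_of_tendsto (hcont.mono_left (nhdsWithin_le_nhds (s := Iio c))) ?_)
  · filter_upwards [Ioo_mem_nhdsGT h1] with z hz
    exact (apply_lt_of_pseudoInv_lt ⟨hpos.le.trans hz.1.le, hz.2.le⟩ hz.1).le
  · filter_upwards [Ioo_mem_nhdsLT hpos] with z hz
    exact (h.lt_apply_of_lt_pseudoInv hz.1.le hz.2).le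

end IsGenerator

lemma tendsto_pseudoInv {φ : ℝ → ℝ≥0∞} {φs : ℕ → ℝ → ℝ≥0∞} (hφ : IsGenerator φ)
    (hφs : ∀ n, IsGenerator (φs n))
    (hconv : ∀ x ∈ Ioc (0:ℝ) 1, Tendsto (fun n => φs n x) atTop (𝓝 (φ x)))
    {ss : ℕ → ℝ≥0∞} (hs : Tendsto ss atTop (𝓝 s)) :
    Tendsto (fun n => pseudoInv (φs n) (ss n)) atTop (𝓝 (pseudoInv φ s)) := by
  refine tendsto_order.2 ⟨fun a ha => ?_, fun b hb => ?_⟩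
  · rcases lt_or_ge a 0 with ha0 | ha0
    · exact Eventually.of_forall fun n => ha0.trans_le pseudoInv_nonneg
    obtain ⟨z, haz, hz⟩ := exists_between ha
    have hz0 : 0 < z := ha0.trans_lt haz
    obtain ⟨r, hsr, hrz⟩ := exists_between (hφ.lt_apply_of_lt_pseudoInv hz0.le hz)
    have hz1 : z ≤ 1 := hz.le.trans pseudoInv_le_one
    filter_upwards [hs.eventually (eventually_lt_nhds hsr),
      (hconv z ⟨hz0, hz1⟩).eventually (eventually_gt_nhds hrz)] with n h1 h2
    exact haz.trans_le (le_pseudoInv ⟨hz0.le, hz1⟩ (h1.trans h2).le)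
  · rcases lt_or_ge 1 b with hb1 | hb1
    · exact Eventually.of_forall fun n => pseudoInv_le_one.trans_lt hb1
    obtain ⟨z, hz, hzb⟩ := exists_between hb
    have hz0 : 0 < z := pseudoInv_nonneg.trans_lt hz
    have hz1 : z ≤ 1 := hzb.le.trans hb1
    obtain ⟨r, hzr, hrs⟩ := exists_between (apply_lt_of_pseudoInv_lt ⟨hz0.le, hz1⟩ hz)
    filter_upwards [(hconv z ⟨hz0, hz1⟩).eventually (eventually_lt_nhds hzr),
      hs.eventually (eventually_gt_nhds hrs)] with n h1 h2
    exact ((hφs n).pseudoInv_le ⟨hz0.le, hz1⟩ (h1.trans h2).le).trans_lt hzb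

end PseudoInverse

section Copula

variable {ψ : ℝ → ℝ≥0∞} {x y : ℝ}

lemma add_lt_of_levelFn_lt (hy : y ∈ Ioc 0 1) (hlt : levelFn ψ 0 x < y) :
    ψ x + ψ y < ψ 0 :=
  lt_tsub_iff_left.1 (apply_lt_of_pseudoInv_lt (Ioc_subset_Icc_self hy) hlt)

namespace IsGenerator

lemma archCopula_le (h : IsGenerator ψ) (hx : x ∈ Icc 0 1) : archCopula ψ x y ≤ x :=
  h.pseudoInv_le hx le_self_add

lemma lt_add_of_lt_levelFn (h : IsGenerator ψ) (hx : x ∈ Ioc 0 1) (hy : 0 ≤ y)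
    (hlt : y < levelFn ψ 0 x) : ψ 0 < ψ x + ψ y := by
  have hx0 : ψ x ≤ ψ 0 := h.antitoneOn ⟨le_rfl, zero_le_one⟩ (Ioc_subset_Icc_self hx) hx.1.le
  rw [add_comm]
  exact (ENNReal.sub_lt_iff_lt_right (h.ne_top hx) hx0).1 (h.lt_apply_of_lt_pseudoInv hy hlt)

lemma archCopula_eq_zero_of_lt_levelFn (h : IsGenerator ψ) (hx : x ∈ Ioc 0 1) (hy : 0 ≤ y)
    (hlt : y < levelFn ψ 0 x) : archCopula ψ x y = 0 :=
  h.pseudoInv_eq_zero (h.lt_add_of_lt_levelFn hx hy hlt).le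

lemma archCopula_pos (h : IsGenerator ψ) (hy : y ∈ Ioc 0 1) (hlt : levelFn ψ 0 x < y) :
    0 < archCopula ψ x y :=
  h.pseudoInv_pos (add_lt_of_levelFn_lt hy hlt)

lemma add_le_of_levelFn_le (h : IsGenerator ψ) (hx : x ∈ Icc 0 1) (hy : y ∈ Ioo 0 1)
    (hle : levelFn ψ 0 x ≤ y) : ψ x + ψ y ≤ ψ 0 := by
  rcases hle.lt_or_eq with hlt | heq
  · exact (add_lt_of_levelFn_lt ⟨hy.1, hy.2.le⟩ hlt).le
  · have hval : ψ y = ψ 0 - ψ x := by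
      rw [← heq]
      exact h.apply_pseudoInv tsub_le_self (heq.trans_lt hy.2)
    rw [hval, add_tsub_cancel_of_le (h.antitoneOn ⟨le_rfl, zero_le_one⟩ hx hx.1)]

lemma apply_archCopula (h : IsGenerator ψ) (hx : x ∈ Ioo 0 1) (hy : y ∈ Ioo 0 1)
    (hle : levelFn ψ 0 x ≤ y) : ψ (archCopula ψ x y) = ψ x + ψ y :=
  h.apply_pseudoInv (h.add_le_of_levelFn_le ⟨hx.1.le, hx.2.le⟩ hy hle)
    ((h.archCopula_le ⟨hx.1.le, hx.2.le⟩).trans_lt hx.2)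

lemma injOn_archCopula (h : IsGenerator ψ) (hx : x ∈ Ioo 0 1) :
    InjOn (archCopula ψ x) (Ioo (levelFn ψ 0 x) 1) := by
  intro y₁ hy₁ y₂ hy₂ heq
  have hy₁' : y₁ ∈ Ioo 0 1 := ⟨pseudoInv_nonneg.trans_lt hy₁.1, hy₁.2⟩
  have hy₂' : y₂ ∈ Ioo 0 1 := ⟨pseudoInv_nonneg.trans_lt hy₂.1, hy₂.2⟩
  have hsum : ψ x + ψ y₁ = ψ x + ψ y₂ := by
    rw [← h.apply_archCopula hx hy₁' hy₁.1.le, ← h.apply_archCopula hx hy₂' hy₂.1.le]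
    exact congrArg ψ heq
  exact h.strictAntiOn.injOn ⟨hy₁'.1.le, hy₁'.2.le⟩ ⟨hy₂'.1.le, hy₂'.2.le⟩
    ((ENNReal.add_right_inj (h.ne_top ⟨hx.1, hx.2.le⟩)).1 hsum)

end IsGenerator

lemma archKernel_of_mem_Ioo (hx : x ∈ Ioo 0 1) :
    archKernel ψ x y =
      if y < levelFn ψ 0 x then 0 else Dplus ψ x / Dplus ψ (archCopula ψ x y) := by
  simp [archKernel, hx.1.ne', hx.2.ne]

lemma IsGenerator.archKernel_nonneg (h : IsGenerator ψ) (hx : x ∈ Ioo 0 1) :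
    0 ≤ archKernel ψ x y := by
  rw [archKernel_of_mem_Ioo hx]
  split_ifs
  · exact le_rfl
  · exact div_nonneg_of_nonpos (h.Dplus_neg hx).le
      (h.Dplus_nonpos ((h.archCopula_le ⟨hx.1.le, hx.2.le⟩).trans_lt hx.2))

lemma IsGenerator.archKernel_mem_Icc (h : IsGenerator ψ) (hx : x ∈ Ioo 0 1) (hy : y ∈ Ioc 0 1)
    (hne : y ≠ levelFn ψ 0 x) : archKernel ψ x y ∈ Icc 0 1 := by
  rw [archKernel_of_mem_Ioo hx]
  split_ifs with hlt
  · exact ⟨le_rfl, zero_le_one⟩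
  · exact h.div_Dplus_mem_Icc hx ⟨h.archCopula_pos hy ((not_lt.1 hlt).lt_of_ne hne.symm),
      h.archCopula_le ⟨hx.1.le, hx.2.le⟩⟩

end Copula

section Convergence

variable {φ : ℝ → ℝ≥0∞} {φs : ℕ → ℝ → ℝ≥0∞} {x y : ℝ}

lemma tendsto_toReal_apply (hφ : IsGenerator φ)
    (hconv : ∀ x ∈ Ioc (0:ℝ) 1, Tendsto (fun n => φs n x) atTop (𝓝 (φ x)))
    (hx : x ∈ Ioc 0 1) : Tendsto (fun n => (φs n x).toReal) atTop (𝓝 (φ x).toReal) :=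
  (ENNReal.tendsto_toReal (hφ.ne_top hx)).comp (hconv x hx)

lemma tendsto_Dplus (hφ : IsGenerator φ) (hφs : ∀ n, IsGenerator (φs n))
    (hconv : ∀ x ∈ Ioc (0:ℝ) 1, Tendsto (fun n => φs n x) atTop (𝓝 (φ x)))
    (hx : x ∈ Ioo 0 1) (hcont : ContinuousAt (Dplus φ) x) {cs : ℕ → ℝ}
    (hcs : Tendsto cs atTop (𝓝 x)) :
    Tendsto (fun n => Dplus (φs n) (cs n)) atTop (𝓝 (Dplus φ x)) :=
  ConvexOn.tendsto_rightD (fun n => (hφs n).convexOn_toReal) hφ.convexOn_toReal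
    (fun _ ht => tendsto_toReal_apply hφ hconv ht) hx hcont hcs

lemma tendsto_archCopula (hφ : IsGenerator φ) (hφs : ∀ n, IsGenerator (φs n))
    (hconv : ∀ x ∈ Ioc (0:ℝ) 1, Tendsto (fun n => φs n x) atTop (𝓝 (φ x)))
    (hx : x ∈ Ioc 0 1) (hy : y ∈ Ioc 0 1) :
    Tendsto (fun n => archCopula (φs n) x y) atTop (𝓝 (archCopula φ x y)) :=
  tendsto_pseudoInv hφ hφs hconv ((hconv x hx).add (hconv y hy))

lemma tendsto_archKernel_of_levelFn_lt (hφ : IsGenerator φ) (hφs : ∀ n, IsGenerator (φs n))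
    (hconv : ∀ x ∈ Ioc (0:ℝ) 1, Tendsto (fun n => φs n x) atTop (𝓝 (φ x)))
    (hx : x ∈ Ioo 0 1) (hy : y ∈ Ioc 0 1) (hcx : ContinuousAt (Dplus φ) x)
    (hlt : levelFn φ 0 x < y) (hcc : ContinuousAt (Dplus φ) (archCopula φ x y)) :
    Tendsto (fun n => archKernel (φs n) x y) atTop (𝓝 (archKernel φ x y)) := by
  have hx' : x ∈ Ioc 0 1 := ⟨hx.1, hx.2.le⟩
  have hC := tendsto_archCopula hφ hφs hconv hx' hy
  have hC0 := hφ.archCopula_pos hy hlt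
  have hC1 : archCopula φ x y < 1 := (hφ.archCopula_le (Ioc_subset_Icc_self hx')).trans_lt hx.2
  have hoff : ∀ᶠ n in atTop, ¬ y < levelFn (φs n) 0 x :=
    (hC.eventually (eventually_gt_nhds hC0)).mono fun n hn hg =>
      hn.ne' ((hφs n).archCopula_eq_zero_of_lt_levelFn hx' hy.1.le hg)
  rw [archKernel_of_mem_Ioo hx, if_neg hlt.not_gt]
  refine ((tendsto_Dplus hφ hφs hconv hx hcx tendsto_const_nhds).div
    (tendsto_Dplus hφ hφs hconv ⟨hC0, hC1⟩ hcc hC) (hφ.Dplus_neg ⟨hC0, hC1⟩).ne).congr' ?_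
  filter_upwards [hoff] with n hn
  rw [archKernel_of_mem_Ioo hx, if_neg hn]
  rfl

lemma eventually_archKernel_le (hφ : IsGenerator φ) (hφs : ∀ n, IsGenerator (φs n))
    (hconv : ∀ x ∈ Ioc (0:ℝ) 1, Tendsto (fun n => φs n x) atTop (𝓝 (φ x)))
    (hx : x ∈ Ioo 0 1) (hy : y ∈ Ioo 0 1) (hlt : y < levelFn φ 0 x) {t δ : ℝ}
    (ht : t ∈ Ioc 0 1) (hδ : 0 < δ) (htδ : (φ t).toReal + δ < (φ x + φ y).toReal) :
    ∀ᶠ n in atTop, archKernel (φs n) x y ≤ -Dplus (φs n) x * t / δ := by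
  have hx' : x ∈ Ioc 0 1 := ⟨hx.1, hx.2.le⟩
  have hy' : y ∈ Ioc 0 1 := ⟨hy.1, hy.2.le⟩
  have hC : Tendsto (fun n => archCopula (φs n) x y) atTop (𝓝 0) := by
    simpa only [hφ.archCopula_eq_zero_of_lt_levelFn hx' hy.1.le hlt] using
      tendsto_archCopula hφ hφs hconv hx' hy'
  have hsum : φ x + φ y ≠ ⊤ := ENNReal.add_ne_top.2 ⟨hφ.ne_top hx', hφ.ne_top hy'⟩
  have hgap : ∀ᶠ n in atTop, (φs n t).toReal + δ < (φs n x + φs n y).toReal :=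
    (((tendsto_toReal_apply hφ hconv ht).add_const δ).sub ((ENNReal.tendsto_toReal hsum).comp
      ((hconv x hx').add (hconv y hy')))).eventually (eventually_lt_nhds (sub_neg.2 htδ))
      |>.mono fun n hn => sub_neg.1 hn
  filter_upwards [hC.eventually (eventually_lt_nhds ht.1), hgap] with n hCn hgapn
  rw [archKernel_of_mem_Ioo hx]
  split_ifs with hg
  · exact div_nonneg (mul_nonneg (neg_nonneg.2 ((hφs n).Dplus_neg hx).le) ht.1.le) hδ.le
  have hgap' : (φs n t).toReal + δ ≤ (φs n (archCopula (φs n) x y)).toReal := by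
    rw [(hφs n).apply_archCopula hx hy (not_lt.1 hg)]
    exact hgapn.le
  exact (hφs n).div_Dplus_le hx pseudoInv_nonneg hCn ht.2 hδ hgap'

/-- Here `C(x, y) = 0`, and `C_n(x, y) → 0` while, unless the `n`-th kernel is already `0`,
`φ_n(C_n(x, y)) = φ_n(x) + φ_n(y)` stays above `φ(0)`; so `D⁺φ_n(C_n(x, y)) → -∞` by
`IsGenerator.div_Dplus_le`. -/
lemma tendsto_archKernel_of_lt_levelFn (hφ : IsGenerator φ) (hφs : ∀ n, IsGenerator (φs n))
    (hconv : ∀ x ∈ Ioc (0:ℝ) 1, Tendsto (fun n => φs n x) atTop (𝓝 (φ x)))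
    (hx : x ∈ Ioo 0 1) (hy : y ∈ Ioo 0 1) (hcx : ContinuousAt (Dplus φ) x)
    (hlt : y < levelFn φ 0 x) :
    Tendsto (fun n => archKernel (φs n) x y) atTop (𝓝 (archKernel φ x y)) := by
  rw [archKernel_of_mem_Ioo hx, if_pos hlt]
  have hgap := hφ.lt_add_of_lt_levelFn ⟨hx.1, hx.2.le⟩ hy.1.le hlt
  have hsum : φ x + φ y ≠ ⊤ :=
    ENNReal.add_ne_top.2 ⟨hφ.ne_top ⟨hx.1, hx.2.le⟩, hφ.ne_top ⟨hy.1, hy.2.le⟩⟩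
  have h0 : φ 0 ≠ ⊤ := ne_top_of_lt hgap
  set δ := ((φ x + φ y).toReal - (φ 0).toReal) / 2 with hδ_def
  have hδ : 0 < δ := by linarith [(ENNReal.toReal_lt_toReal h0 hsum).2 hgap]
  refine tendsto_order.2 ⟨fun a ha => Eventually.of_forall fun n =>
    ha.trans_le ((hφs n).archKernel_nonneg hx), fun ε hε => ?_⟩
  set B := 1 - Dplus φ x
  have hB : 0 < B := by linarith [hφ.Dplus_neg hx]
  obtain ⟨t, hφt, ht0, htm⟩ := hφ.exists_toReal_lt h0 hδ (lt_min one_pos (by positivity) :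
    0 < min 1 (ε * δ / B))
  have htε : B * t < ε * δ := by
    rw [mul_comm, ← lt_div_iff₀ hB]
    exact (lt_min_iff.1 htm).2
  filter_upwards [eventually_archKernel_le hφ hφs hconv hx hy hlt
      ⟨ht0, htm.le.trans (min_le_left _ _)⟩ hδ (by linarith),
    (tendsto_Dplus hφ hφs hconv hx hcx tendsto_const_nhds).eventually
      (eventually_gt_nhds (sub_one_lt (Dplus φ x)))] with n hKn hDn
  refine hKn.trans_lt ?_
  rw [div_lt_iff₀ hδ]
  exact (mul_lt_mul_of_pos_right (by linarith) ht0).trans htε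

lemma tendsto_archKernel (hφ : IsGenerator φ) (hφs : ∀ n, IsGenerator (φs n))
    (hconv : ∀ x ∈ Ioc (0:ℝ) 1, Tendsto (fun n => φs n x) atTop (𝓝 (φ x)))
    (hx : x ∈ Ioo 0 1) (hy : y ∈ Ioo 0 1) (hne : y ≠ levelFn φ 0 x)
    (hcx : ContinuousAt (Dplus φ) x)
    (hcc : levelFn φ 0 x < y → ContinuousAt (Dplus φ) (archCopula φ x y)) :
    Tendsto (fun n => archKernel (φs n) x y) atTop (𝓝 (archKernel φ x y)) := by
  rcases hne.lt_or_gt with hlt | hgt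
  · exact tendsto_archKernel_of_lt_levelFn hφ hφs hconv hx hy hcx hlt
  · exact tendsto_archKernel_of_levelFn_lt hφ hφs hconv hx ⟨hy.1, hy.2.le⟩ hcx hgt (hcc hgt)

end Convergence

section AlmostEverywhere

lemma MonotoneOn.exists_measurable_eqOn {s : Set ℝ} (hs : MeasurableSet s) {f : ℝ → ℝ}
    (hf : MonotoneOn f s) : ∃ g : ℝ → ℝ, Measurable g ∧ EqOn g f s := by
  classical
  refine ⟨s.piecewise f 0, measurable_of_restrict_of_restrict_compl hs ?_ ?_,
    fun x hx => piecewise_eq_of_mem _ _ _ hx⟩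
  · rw [domRestrict_piecewise]
    exact Monotone.measurable fun a b hab => hf a.2 b.2 hab
  · rw [domRestrict_piecewise_compl]
    exact measurable_const

lemma measure_prod_eq_zero_of_countable_sections {α β : Type*} [MeasurableSpace α]
    [MeasurableSpace β] {μ : Measure α} {ν : Measure β} [NullSingletonClass ν]
    {s : Set (α × β)} (hs : MeasurableSet s) (hsec : ∀ x, (Prod.mk x ⁻¹' s).Countable) :
    μ.prod ν s = 0 :=
  Measure.measure_prod_null_of_ae_null hs (Eventually.of_forall fun x => (hsec x).measure_zero ν)

local notation "μI" => volume.restrict (Icc (0:ℝ) 1)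

lemma ae_mem_Ioo_unitInterval : ∀ᵐ x ∂μI, x ∈ Ioo (0:ℝ) 1 := by
  filter_upwards [ae_restrict_mem measurableSet_Icc, Measure.ae_ne μI 0, Measure.ae_ne μI 1]
    with x hx h0 h1
  exact ⟨hx.1.lt_of_ne h0.symm, hx.2.lt_of_ne h1⟩

/-- `ψ` made constant outside `[0,1]`: it is antitone, hence measurable, on all of `ℝ`, and its
level function and copula agree with those of `ψ` on `[0,1]`. -/
def extendIcc (ψ : ℝ → ℝ≥0∞) : ℝ → ℝ≥0∞ := IccExtend (zero_le_one' ℝ) fun z : Icc (0:ℝ) 1 => ψ z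

variable {ψ : ℝ → ℝ≥0∞} {x y : ℝ}

lemma extendIcc_of_mem (hx : x ∈ Icc 0 1) : extendIcc ψ x = ψ x :=
  IccExtend_of_mem _ _ hx

lemma pseudoInv_extendIcc : pseudoInv (extendIcc ψ) = pseudoInv ψ := by
  ext s
  refine congrArg sSup (Set.ext fun z => and_congr_right fun hz => ?_)
  rw [extendIcc_of_mem hz]

lemma levelFn_extendIcc (hx : x ∈ Icc 0 1) : levelFn (extendIcc ψ) 0 x = levelFn ψ 0 x := by
  rw [levelFn, levelFn, pseudoInv_extendIcc, extendIcc_of_mem hx,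
    extendIcc_of_mem ⟨le_rfl, zero_le_one⟩]

lemma archCopula_extendIcc (hx : x ∈ Icc 0 1) (hy : y ∈ Icc 0 1) :
    archCopula (extendIcc ψ) x y = archCopula ψ x y := by
  rw [archCopula, archCopula, pseudoInv_extendIcc, extendIcc_of_mem hx, extendIcc_of_mem hy]

lemma IsGenerator.measurable_extendIcc (h : IsGenerator ψ) : Measurable (extendIcc ψ) :=
  Antitone.measurable fun _ _ hab =>
    h.antitoneOn (Subtype.mem _) (Subtype.mem _) (monotone_projIcc _ hab)

lemma IsGenerator.measurable_levelFn_extendIcc (h : IsGenerator ψ) :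
    Measurable (levelFn (extendIcc ψ) 0) :=
  antitone_pseudoInv.measurable.comp (h.measurable_extendIcc.const_sub _)

lemma IsGenerator.measurable_archCopula_extendIcc (h : IsGenerator ψ) :
    Measurable (Function.uncurry (archCopula (extendIcc ψ))) :=
  antitone_pseudoInv.measurable.comp
    ((h.measurable_extendIcc.comp measurable_fst).add (h.measurable_extendIcc.comp measurable_snd))

lemma IsGenerator.ae_regular (h : IsGenerator ψ) :
    ∀ᵐ p ∂(μI).prod μI, p.1 ∈ Ioo 0 1 ∧ p.2 ∈ Ioo 0 1 ∧ p.2 ≠ levelFn ψ 0 p.1 := by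
  have hgraph : (μI).prod μI {p | p.2 = levelFn (extendIcc ψ) 0 p.1} = 0 :=
    measure_prod_eq_zero_of_countable_sections
      (measurableSet_eq_fun measurable_snd (h.measurable_levelFn_extendIcc.comp measurable_fst))
      fun x => (countable_singleton (levelFn (extendIcc ψ) 0 x)).mono fun _ hy => hy
  filter_upwards [Measure.quasiMeasurePreserving_fst.ae ae_mem_Ioo_unitInterval,
    Measure.quasiMeasurePreserving_snd.ae ae_mem_Ioo_unitInterval,
    measure_eq_zero_iff_ae_notMem.1 hgraph] with p hx hy hp
  refine ⟨hx, hy, fun he => hp ?_⟩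
  rwa [levelFn_extendIcc ⟨hx.1.le, hx.2.le⟩]

/-- The discontinuities of `D⁺ψ` are countable, and so is their preimage under the injective
map `C(x, ·)` on `(f⁰(x), 1)`. -/
lemma IsGenerator.ae_continuousAt_Dplus (h : IsGenerator ψ) :
    ∀ᵐ p ∂(μI).prod μI, ContinuousAt (Dplus ψ) p.1 ∧
      (levelFn ψ 0 p.1 < p.2 → ContinuousAt (Dplus ψ) (archCopula ψ p.1 p.2)) := by
  set E := {x ∈ Ioo (0:ℝ) 1 | ¬ContinuousAt (Dplus ψ) x}
  have hE : E.Countable := h.convexOn_toReal.countable_not_continuousAt_rightD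
  set N := {p : ℝ × ℝ | p.1 ∈ Ioo 0 1 ∧ levelFn (extendIcc ψ) 0 p.1 < p.2 ∧ p.2 < 1 ∧
    archCopula (extendIcc ψ) p.1 p.2 ∈ E}
  have hNm : MeasurableSet N :=
    (measurable_fst measurableSet_Ioo).inter
      ((measurableSet_lt (h.measurable_levelFn_extendIcc.comp measurable_fst) measurable_snd).inter
      ((measurableSet_lt measurable_snd measurable_const).inter
      (h.measurable_archCopula_extendIcc hE.measurableSet)))
  have hN : (μI).prod μI N = 0 := by
    refine measure_prod_eq_zero_of_countable_sections hNm fun x => ?_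
    by_cases hx : x ∈ Ioo 0 1
    · have hsec : Prod.mk x ⁻¹' N ⊆ Ioo (levelFn ψ 0 x) 1 ∩ archCopula ψ x ⁻¹' E := by
        rintro y ⟨-, hL, hy1, hC⟩
        rw [levelFn_extendIcc ⟨hx.1.le, hx.2.le⟩] at hL
        have hy : y ∈ Icc 0 1 := ⟨pseudoInv_nonneg.trans hL.le, hy1.le⟩
        rw [archCopula_extendIcc ⟨hx.1.le, hx.2.le⟩ hy] at hC
        exact ⟨⟨hL, hy1⟩, hC⟩
      refine (MapsTo.countable_of_injOn (fun y hy => hy.2) ?_ hE).mono hsec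
      exact (h.injOn_archCopula hx).mono inter_subset_left
    · exact countable_empty.mono fun y hy => hx hy.1
  filter_upwards [h.ae_regular, Measure.quasiMeasurePreserving_fst.ae (hE.ae_notMem μI),
    measure_eq_zero_iff_ae_notMem.1 hN] with p ⟨hx, hy, _⟩ hxE hpN
  refine ⟨not_not.1 fun hc => hxE ⟨hx, hc⟩, fun hlt => not_not.1 fun hc => hpN ?_⟩
  have hx' : p.1 ∈ Icc 0 1 := ⟨hx.1.le, hx.2.le⟩
  have hy' : p.2 ∈ Icc 0 1 := ⟨hy.1.le, hy.2.le⟩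
  refine ⟨hx, by rwa [levelFn_extendIcc hx'], hy.2, ?_, ?_⟩ <;>
    rw [archCopula_extendIcc hx' hy']
  · exact ⟨h.archCopula_pos ⟨hy.1, hy.2.le⟩ hlt, (h.archCopula_le hx').trans_lt hx.2⟩
  · exact hc

end AlmostEverywhere

section Integrals

local notation "μI" => volume.restrict (Icc (0:ℝ) 1)

variable {ψ φ : ℝ → ℝ≥0∞} {φs : ℕ → ℝ → ℝ≥0∞}

lemma IsGenerator.aestronglyMeasurable_archKernel (h : IsGenerator ψ) :
    AEStronglyMeasurable (Function.uncurry (archKernel ψ)) ((μI).prod μI) := by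
  obtain ⟨D, hDm, hD⟩ :=
    h.convexOn_toReal.monotoneOn_rightD.exists_measurable_eqOn (f := Dplus ψ) measurableSet_Ioo
  refine (Measurable.aestronglyMeasurable (f := fun p : ℝ × ℝ =>
      if p.2 < levelFn (extendIcc ψ) 0 p.1 then 0
      else D p.1 / D (archCopula (extendIcc ψ) p.1 p.2)) ?_).congr ?_
  · exact Measurable.ite
      (measurableSet_lt measurable_snd (h.measurable_levelFn_extendIcc.comp measurable_fst))
      measurable_const ((hDm.comp measurable_fst).div (hDm.comp h.measurable_archCopula_extendIcc))
  filter_upwards [h.ae_regular] with p ⟨hx, hy, hne⟩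
  have hx' : p.1 ∈ Icc 0 1 := ⟨hx.1.le, hx.2.le⟩
  have hy' : p.2 ∈ Icc 0 1 := ⟨hy.1.le, hy.2.le⟩
  change _ = archKernel ψ p.1 p.2
  rw [levelFn_extendIcc hx', archCopula_extendIcc hx' hy', archKernel_of_mem_Ioo hx]
  split_ifs with hlt
  · rfl
  have hC : archCopula ψ p.1 p.2 ∈ Ioo 0 1 :=
    ⟨h.archCopula_pos ⟨hy.1, hy.2.le⟩ ((not_lt.1 hlt).lt_of_ne hne.symm),
      (h.archCopula_le hx').trans_lt hx.2⟩
  rw [hD hx, hD hC]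

theorem tendsto_integral_integral_of_ae_tendsto {α β : Type*} [MeasurableSpace α]
    [MeasurableSpace β] {μ : Measure α} {ν : Measure β} [IsFiniteMeasure μ] [IsFiniteMeasure ν]
    {G : ℕ → α × β → ℝ} {g : α × β → ℝ} {C : ℝ}
    (hG : ∀ n, AEStronglyMeasurable (G n) (μ.prod ν)) (hGC : ∀ n, ∀ᵐ p ∂μ.prod ν, ‖G n p‖ ≤ C)
    (hlim : ∀ᵐ p ∂μ.prod ν, Tendsto (fun n => G n p) atTop (𝓝 (g p))) :
    Tendsto (fun n => ∫ y, ∫ x, G n (x, y) ∂μ ∂ν) atTop (𝓝 (∫ y, ∫ x, g (x, y) ∂μ ∂ν)) := by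
  have hg : AEStronglyMeasurable g (μ.prod ν) := aestronglyMeasurable_of_tendsto_ae atTop hG hlim
  have hgC : ∀ᵐ p ∂μ.prod ν, ‖g p‖ ≤ C := by
    filter_upwards [hlim, ae_all_iff.2 hGC] with p hp hpC
    exact le_of_tendsto' hp.norm hpC
  have hiter : ∀ f : α × β → ℝ, AEStronglyMeasurable f (μ.prod ν) →
      (∀ᵐ p ∂μ.prod ν, ‖f p‖ ≤ C) → ∫ y, ∫ x, f (x, y) ∂μ ∂ν = ∫ p, f p ∂μ.prod ν :=
    fun f hf hfC => (integral_prod_symm f ((integrable_const C).mono' hf hfC)).symm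
  simp only [hiter _ (hG _) (hGC _), hiter g hg hgC]
  exact tendsto_integral_of_dominated_convergence (fun _ => C) hG (integrable_const C) hGC hlim

lemma tendsto_integral_integral_archKernel (hφ : IsGenerator φ) (hφs : ∀ n, IsGenerator (φs n))
    (hconv : ∀ x ∈ Ioc (0:ℝ) 1, Tendsto (fun n => φs n x) atTop (𝓝 (φ x)))
    {Φ : ℝ → ℝ → ℝ} (hΦ : Continuous (Function.uncurry Φ)) :
    Tendsto (fun n => ∫ y in Icc (0:ℝ) 1, ∫ x in Icc (0:ℝ) 1, Φ (archKernel (φs n) x y) y) atTop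
      (𝓝 (∫ y in Icc (0:ℝ) 1, ∫ x in Icc (0:ℝ) 1, Φ (archKernel φ x y) y)) := by
  obtain ⟨C, hC⟩ :=
    (isCompact_Icc.prod isCompact_Icc).exists_bound_of_continuousOn hΦ.continuousOn
  refine tendsto_integral_integral_of_ae_tendsto (μ := μI) (ν := μI)
    (G := fun n p => Φ (archKernel (φs n) p.1 p.2) p.2) (g := fun p => Φ (archKernel φ p.1 p.2) p.2)
    (C := C) (fun n => ?_) (fun n => ?_) ?_
  · exact hΦ.comp_aestronglyMeasurable
      ((hφs n).aestronglyMeasurable_archKernel.prodMk measurable_snd.aestronglyMeasurable)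
  · filter_upwards [(hφs n).ae_regular] with p ⟨hx, hy, hne⟩
    exact hC (_, _) ⟨(hφs n).archKernel_mem_Icc hx ⟨hy.1, hy.2.le⟩ hne, hy.1.le, hy.2.le⟩
  · filter_upwards [hφ.ae_regular, hφ.ae_continuousAt_Dplus] with p ⟨hx, hy, hne⟩ ⟨hcx, hcc⟩
    exact (hΦ.tendsto _).comp
      ((tendsto_archKernel hφ hφs hconv hx hy hne hcx hcc).prodMk_nhds tendsto_const_nhds)

end Integrals

/-- For Archimedean copulas whose generators converge pointwise on
`(0,1]`, the dependence measures `ζ₁` and `r` of the copulas converge: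
`ζ₁(C_n) → ζ₁(C)` and `r(C_n) → r(C)`. -/
theorem stmt13 (φ : ℝ → ℝ≥0∞) (φseq : ℕ → ℝ → ℝ≥0∞)
    (hφ : IsGenerator φ) (hφseq : ∀ n, IsGenerator (φseq n))
    (hconv : ∀ x ∈ Set.Ioc (0:ℝ) 1,
      Filter.Tendsto (fun n => φseq n x) Filter.atTop (nhds (φ x))) :
    Filter.Tendsto (fun n => zeta1 (archKernel (φseq n))) Filter.atTop
        (nhds (zeta1 (archKernel φ))) ∧
      Filter.Tendsto (fun n => rdep (archKernel (φseq n))) Filter.atTop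
        (nhds (rdep (archKernel φ))) :=
  ⟨(tendsto_integral_integral_archKernel hφ hφseq hconv (Φ := fun k y => |k - y|)
      (by fun_prop)).const_mul 3,
    ((tendsto_integral_integral_archKernel hφ hφseq hconv (Φ := fun k _ => k ^ 2)
      (by fun_prop)).const_mul 6).sub_const 2⟩
end
end

section
/- Let C_A, C_{A₁}, C_{A₂}, … be bivariate Extreme Value copulas with Pickands dependence functions A, A₁, A₂, …, respectively. Then C_{A_n}(x,y) → C_A(x,y) for all x,y ∈ [0,1] if, and only if, A_n(x) → A(x) for all x ∈ [0,1] (equivalently, if and only if A_n → A uniformly on [0,1]). -/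
/-! Along the curve `t ↦ (e^{-t}, e^{-(1-t)})` the copula `C_A` takes the value `e^{-A(t)}`, so
convergence of the copulas forces convergence of the Pickands functions; conversely `C_A(x,y)`
depends continuously on the single value `A(log x / log(xy))`. A Pickands function is convex with
`A(0) = A(1) = 1` and `max(t, 1-t) ≤ A(t)`, so its slopes lie in `[-1, 1]`: the family is
1-Lipschitz, hence equicontinuous, and pointwise convergence on the compact `[0,1]` is uniform. -/

open MeasureTheory Filter Set
open scoped ENNReal

noncomputable section

/-- `A` is a Pickands dependence function: convex on `[0,1]`, `A 0 = A 1 = 1` and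
`max (1−x) x ≤ A x ≤ 1` on `[0,1]`. -/
def IsPickands (A : ℝ → ℝ) : Prop :=
  ConvexOn ℝ (Set.Icc (0:ℝ) 1) A ∧ A 0 = 1 ∧ A 1 = 1 ∧
    ∀ x ∈ Set.Icc (0:ℝ) 1, max (1 - x) x ≤ A x ∧ A x ≤ 1

/-- The Extreme Value copula induced by the Pickands dependence function `A`:
`C_A(x,y) = (xy)^{A(log x / log(xy))}` for `x,y ∈ (0,1)` and `C_A(x,y) = xy` otherwise. -/
noncomputable def evCopula (A : ℝ → ℝ) (x y : ℝ) : ℝ :=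
  if (0 < x ∧ x < 1) ∧ (0 < y ∧ y < 1) then
    (x * y) ^ A (Real.log x / Real.log (x * y))
  else x * y

/-- The set `Cont(D⁺A)` of continuity points of `D⁺A` in `(0,1)`. -/
def ContDA (A : ℝ → ℝ) : Set ℝ :=
  {x | x ∈ Set.Ioo (0:ℝ) 1 ∧ ContinuousAt (rightD A) x}

/-- The Markov kernel (as conditional distribution function `(x,y) ↦ K_{C_A}(x,[0,y])`) of
the Extreme Value copula induced by `A`. -/
noncomputable def evKernel (A : ℝ → ℝ) (x y : ℝ) : ℝ :=
  if 0 < x ∧ x < 1 then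
    if 0 < y ∧ y < 1 then
      evCopula A x y *
        (rightD A (Real.log x / Real.log (x * y)) * Real.log y / (x * Real.log (x * y))
          + A (Real.log x / Real.log (x * y)) / x)
    else y
  else 1

theorem TendstoUniformlyOn.of_equicontinuousOn_of_tendsto {ι X α : Type*}
    [TopologicalSpace X] [UniformSpace α] {F : ι → X → α} {f : X → α} {l : Filter ι} {s : Set X}
    (hs : IsCompact s)
    (hF : EquicontinuousOn F s) (h : ∀ x ∈ s, Tendsto (F · x) l (nhds (f x))) :
    TendstoUniformlyOn F f l s := by
  have hconv := (EquicontinuousOn.tendsto_uniformOnFun_iff_pi' (𝔖 := {s}) (by simpa using hs)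
    (by simpa using hF) l f).2 (by simpa [tendsto_pi_nhds] using h)
  exact UniformOnFun.tendsto_iff_tendstoUniformlyOn.1 hconv s rfl

namespace IsPickands

variable {A : ℝ → ℝ}

theorem sub_le_of_le (hA : IsPickands A) {x y : ℝ} (hx : x ∈ Icc (0:ℝ) 1)
    (hy : y ∈ Icc (0:ℝ) 1) (hxy : x ≤ y) : A y - A x ≤ y - x := by
  obtain ⟨hconv, -, h1, hbound⟩ := hA
  rcases hxy.eq_or_lt with rfl | hxy
  · simp
  rcases hy.2.eq_or_lt with rfl | hy1
  · linarith [le_max_right _ _ |>.trans (hbound x hx).1]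
  -- the slope on `[x, y]` is at most the slope on `[y, 1]`, which is at most `1` as `y ≤ A y`
  have hslope := hconv.slope_mono_adjacent hx (right_mem_Icc.2 zero_le_one) hxy hy1
  rw [h1, div_le_div_iff₀ (by linarith) (by linarith)] at hslope
  nlinarith [le_max_right _ _ |>.trans (hbound y hy).1]

theorem sub_le_of_le' (hA : IsPickands A) {x y : ℝ} (hx : x ∈ Icc (0:ℝ) 1)
    (hy : y ∈ Icc (0:ℝ) 1) (hxy : x ≤ y) : A x - A y ≤ y - x := by
  obtain ⟨hconv, h0, -, hbound⟩ := hA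
  rcases hxy.eq_or_lt with rfl | hxy
  · simp
  rcases hx.1.eq_or_lt with rfl | hx0
  · linarith [le_max_left _ _ |>.trans (hbound y hy).1]
  have hslope := hconv.slope_mono_adjacent (left_mem_Icc.2 zero_le_one) hy hx0 hxy
  rw [h0, div_le_div_iff₀ (by linarith) (by linarith)] at hslope
  nlinarith [le_max_left _ _ |>.trans (hbound x hx).1]

theorem lipschitzOnWith (hA : IsPickands A) : LipschitzOnWith 1 A (Icc 0 1) := by
  refine LipschitzOnWith.of_le_add fun x hx y hy => ?_
  rw [Real.dist_eq]
  rcases le_total y x with hyx | hxy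
  · linarith [hA.sub_le_of_le hy hx hyx, le_abs_self (x - y)]
  · linarith [hA.sub_le_of_le' hx hy hxy, neg_abs_le (x - y)]

end IsPickands

theorem evCopula_exp_neg (B : ℝ → ℝ) {t : ℝ} (ht : t ∈ Ioo (0:ℝ) 1) :
    evCopula B (Real.exp (-t)) (Real.exp (-(1 - t))) = Real.exp (-B t) := by
  have hprod : Real.exp (-t) * Real.exp (-(1 - t)) = Real.exp (-1) := by
    rw [← Real.exp_add]; ring_nf
  rw [evCopula, if_pos ⟨⟨Real.exp_pos _, Real.exp_lt_one_iff.2 (by linarith [ht.1])⟩,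
      ⟨Real.exp_pos _, Real.exp_lt_one_iff.2 (by linarith [ht.2])⟩⟩,
    hprod, Real.log_exp, Real.log_exp, neg_div_neg_eq, div_one, ← Real.exp_mul]
  ring_nf

theorem log_div_log_mul_mem_Icc {x y : ℝ} (hx : x ∈ Ioo (0:ℝ) 1) (hy : y ∈ Ioo (0:ℝ) 1) :
    Real.log x / Real.log (x * y) ∈ Icc (0:ℝ) 1 := by
  have hlx := Real.log_neg hx.1 hx.2
  have hly := Real.log_neg hy.1 hy.2
  rw [Real.log_mul hx.1.ne' hy.1.ne']
  exact ⟨div_nonneg_of_nonpos hlx.le (by linarith),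
    div_le_one_of_ge (by linarith) (by linarith)⟩

section Convergence

variable {A : ℝ → ℝ} {Aseq : ℕ → ℝ → ℝ}

theorem tendsto_pickands_of_tendsto_evCopula (hA : IsPickands A)
    (hAseq : ∀ n, IsPickands (Aseq n))
    (h : ∀ x ∈ Icc (0:ℝ) 1, ∀ y ∈ Icc (0:ℝ) 1,
      Tendsto (fun n => evCopula (Aseq n) x y) atTop (nhds (evCopula A x y)))
    {t : ℝ} (ht : t ∈ Icc (0:ℝ) 1) : Tendsto (fun n => Aseq n t) atTop (nhds (A t)) := by
  rcases eq_endpoints_or_mem_Ioo_of_mem_Icc ht with rfl | rfl | ht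
  · simp only [(hAseq _).2.1, hA.2.1, tendsto_const_nhds]
  · simp only [(hAseq _).2.2.1, hA.2.2.1, tendsto_const_nhds]
  have hcop := h (Real.exp (-t))
    ⟨(Real.exp_pos _).le, Real.exp_le_one_iff.2 (by linarith [ht.1])⟩
    (Real.exp (-(1 - t))) ⟨(Real.exp_pos _).le, Real.exp_le_one_iff.2 (by linarith [ht.2])⟩
  simp only [evCopula_exp_neg _ ht] at hcop
  simpa only [Real.log_exp, neg_neg] using hcop.log (Real.exp_pos _).ne' |>.neg

theorem tendsto_evCopula_of_tendsto_pickands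
    (h : ∀ t ∈ Icc (0:ℝ) 1, Tendsto (fun n => Aseq n t) atTop (nhds (A t)))
    (x y : ℝ) : Tendsto (fun n => evCopula (Aseq n) x y) atTop (nhds (evCopula A x y)) := by
  unfold evCopula
  split_ifs with hxy
  · exact (Real.continuous_const_rpow (mul_pos hxy.1.1 hxy.2.1).ne').continuousAt.tendsto.comp
      (h _ (log_div_log_mul_mem_Icc hxy.1 hxy.2))
  · exact tendsto_const_nhds

end Convergence

/-- For Extreme Value copulas, pointwise convergence of the copulas on
`[0,1]²` is equivalent to pointwise convergence of the Pickands dependence functions on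
`[0,1]`, which in turn is equivalent to their uniform convergence on `[0,1]`. -/
theorem stmt14 (A : ℝ → ℝ) (Aseq : ℕ → ℝ → ℝ)
    (hA : IsPickands A) (hAseq : ∀ n, IsPickands (Aseq n)) :
    ((∀ x ∈ Set.Icc (0:ℝ) 1, ∀ y ∈ Set.Icc (0:ℝ) 1,
        Filter.Tendsto (fun n => evCopula (Aseq n) x y) Filter.atTop
          (nhds (evCopula A x y)))
      ↔ (∀ x ∈ Set.Icc (0:ℝ) 1,
          Filter.Tendsto (fun n => Aseq n x) Filter.atTop (nhds (A x)))) ∧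
    ((∀ x ∈ Set.Icc (0:ℝ) 1,
        Filter.Tendsto (fun n => Aseq n x) Filter.atTop (nhds (A x)))
      ↔ TendstoUniformlyOn (fun n => Aseq n) A Filter.atTop (Set.Icc (0:ℝ) 1)) := by
  have hequi : EquicontinuousOn Aseq (Icc 0 1) :=
    (LipschitzOnWith.uniformEquicontinuousOn _ 1 fun n =>
      (hAseq n).lipschitzOnWith).equicontinuousOn
  exact ⟨⟨fun h t ht => tendsto_pickands_of_tendsto_evCopula hA hAseq h ht,
      fun h x _ y _ => tendsto_evCopula_of_tendsto_pickands h x y⟩,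
    ⟨TendstoUniformlyOn.of_equicontinuousOn_of_tendsto isCompact_Icc hequi,
      fun h x hx => h.tendsto_at hx⟩⟩
end
end

section
/- Let C, C₁, C₂, … be bivariate Extreme Value copulas with Pickands dependence functions A, A₁, A₂, …, respectively, and choose the Markov kernels according to the explicit Extreme Value kernel formula. If (C_n) converges pointwise to C, then for every x ∈ (0,1) the set U_x = {y ∈ (0,1) : log(x)/log(xy) ∈ Cont(D⁺A)} has full Lebesgue measure in (hence is dense in) [0,1], and lim_{n→∞} K_{C_n}(x,[0,y]) = K_C(x,[0,y]) holds for every y ∈ U_x. -/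
open MeasureTheory Filter Set
open scoped ENNReal

noncomputable section

lemma bddBelow_slopes {A : ℝ → ℝ} (hA : ConvexOn ℝ (Set.Icc (0:ℝ) 1) A) {z : ℝ}
    (hz : z ∈ Set.Ioo (0:ℝ) 1) :
    BddBelow ((fun y => (A y - A z) / (y - z)) '' Set.Ioc z 1) := by
  refine ⟨(A z - A 0) / (z - 0), ?_⟩
  rintro s ⟨w, hw, rfl⟩
  exact hA.slope_mono_adjacent ⟨le_refl 0, by linarith [hz.2]⟩
    ⟨by linarith [hz.1, hw.1], hw.2⟩ hz.1 hw.1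

lemma rightD_le_slope {A : ℝ → ℝ} (hA : ConvexOn ℝ (Set.Icc (0:ℝ) 1) A) {z w : ℝ}
    (hz : z ∈ Set.Ioo (0:ℝ) 1) (hw : w ∈ Set.Ioc z 1) :
    rightD A z ≤ (A w - A z) / (w - z) :=
  csInf_le (bddBelow_slopes hA hz) (Set.mem_image_of_mem _ hw)

lemma slope_le_rightD {A : ℝ → ℝ} (hA : ConvexOn ℝ (Set.Icc (0:ℝ) 1) A) {u z : ℝ}
    (hu : u ∈ Set.Icc (0:ℝ) 1) (hz : z ∈ Set.Ioo (0:ℝ) 1) (huz : u < z) :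
    (A z - A u) / (z - u) ≤ rightD A z := by
  refine le_csInf ⟨_, Set.mem_image_of_mem _ (⟨hz.2, le_refl 1⟩ : (1:ℝ) ∈ Set.Ioc z 1)⟩ ?_
  rintro s ⟨w, hw, rfl⟩
  exact hA.slope_mono_adjacent hu ⟨by linarith [hz.1, hw.1], hw.2⟩ huz hw.1

lemma rightD_monoOn {A : ℝ → ℝ} (hA : ConvexOn ℝ (Set.Icc (0:ℝ) 1) A) :
    MonotoneOn (rightD A) (Set.Ioo (0:ℝ) 1) := by
  intro u hu w hw huw
  rcases eq_or_lt_of_le huw with rfl | h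
  · exact le_refl _
  · calc rightD A u ≤ (A w - A u) / (w - u) := rightD_le_slope hA hu ⟨h, hw.2.le⟩
      _ ≤ rightD A w := slope_le_rightD hA ⟨hu.1.le, hu.2.le⟩ hw h

lemma evCopula_exp {B : ℝ → ℝ} {z : ℝ} (hz : z ∈ Set.Ioo (0:ℝ) 1) :
    evCopula B (Real.exp (-z)) (Real.exp (-(1 - z))) = Real.exp (-(B z)) := by
  have hx1 : Real.exp (-z) < 1 := by
    rw [Real.exp_lt_one_iff]; linarith [hz.1]
  have hy1 : Real.exp (-(1 - z)) < 1 := by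
    rw [Real.exp_lt_one_iff]; linarith [hz.2]
  have hxy : Real.exp (-z) * Real.exp (-(1 - z)) = Real.exp (-1) := by
    rw [← Real.exp_add]; ring_nf
  rw [evCopula, if_pos ⟨⟨Real.exp_pos _, hx1⟩, ⟨Real.exp_pos _, hy1⟩⟩, hxy,
    Real.log_exp, Real.log_exp, Real.rpow_def_of_pos (Real.exp_pos _), Real.log_exp]
  congr 1
  have : -z / -1 = z := by ring
  rw [this]; ring

lemma ptconv {A : ℝ → ℝ} {Aseq : ℕ → ℝ → ℝ}
    (hA : IsPickands A) (hAseq : ∀ n, IsPickands (Aseq n))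
    (hconv : ∀ x ∈ Set.Icc (0:ℝ) 1, ∀ y ∈ Set.Icc (0:ℝ) 1,
      Filter.Tendsto (fun n => evCopula (Aseq n) x y) Filter.atTop
        (nhds (evCopula A x y))) :
    ∀ z ∈ Set.Icc (0:ℝ) 1, Filter.Tendsto (fun n => Aseq n z) Filter.atTop (nhds (A z)) := by
  intro z hz
  rcases eq_or_lt_of_le hz.1 with rfl | h0
  · simp only [hA.2.1, fun n => (hAseq n).2.1]
    exact tendsto_const_nhds
  rcases eq_or_lt_of_le hz.2 with rfl | h1
  · simp only [hA.2.2.1, fun n => (hAseq n).2.2.1]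
    exact tendsto_const_nhds
  have hzI : z ∈ Set.Ioo (0:ℝ) 1 := ⟨h0, h1⟩
  have hxm : Real.exp (-z) ∈ Set.Icc (0:ℝ) 1 :=
    ⟨(Real.exp_pos _).le, by rw [Real.exp_le_one_iff]; linarith⟩
  have hym : Real.exp (-(1 - z)) ∈ Set.Icc (0:ℝ) 1 :=
    ⟨(Real.exp_pos _).le, by rw [Real.exp_le_one_iff]; linarith⟩
  have h := hconv _ hxm _ hym
  rw [evCopula_exp hzI] at h
  have h2 : Filter.Tendsto (fun n => Real.exp (-(Aseq n z))) Filter.atTop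
      (nhds (Real.exp (-(A z)))) := by
    refine h.congr fun n => ?_
    rw [evCopula_exp hzI]
  have h3 := ((Real.continuousAt_log (Real.exp_pos _).ne').tendsto.comp h2)
  simp only [Function.comp_def, Real.log_exp] at h3
  simpa using h3.neg

lemma rightD_tendsto {A : ℝ → ℝ} {Aseq : ℕ → ℝ → ℝ}
    (hA : ConvexOn ℝ (Set.Icc (0:ℝ) 1) A) (hAseq : ∀ n, ConvexOn ℝ (Set.Icc (0:ℝ) 1) (Aseq n))
    (pt : ∀ z ∈ Set.Icc (0:ℝ) 1, Filter.Tendsto (fun n => Aseq n z) Filter.atTop (nhds (A z)))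
    {z : ℝ} (hz : z ∈ Set.Ioo (0:ℝ) 1) (hc : ContinuousAt (rightD A) z) :
    Filter.Tendsto (fun n => rightD (Aseq n) z) Filter.atTop (nhds (rightD A z)) := by
  refine tendsto_order.2 ⟨fun c hc' => ?_, fun c hc' => ?_⟩
  · -- c < rightD A z : eventually c < rightD (Aseq n) z
    have hnb : (rightD A) ⁻¹' Set.Ioi c ∈ nhds z :=
      hc.preimage_mem_nhds (isOpen_Ioi.mem_nhds hc')
    have hcl : z ∈ closure (Set.Ioo (0:ℝ) z) := by
      rw [closure_Ioo (ne_of_lt hz.1)]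
      exact ⟨hz.1.le, le_refl z⟩
    obtain ⟨u, hu1, hu2⟩ := mem_closure_iff_nhds.1 hcl _ hnb
    have huI : u ∈ Set.Ioo (0:ℝ) 1 := ⟨hu2.1, hu2.2.trans hz.2⟩
    have h1 : c < (A z - A u) / (z - u) :=
      lt_of_lt_of_le hu1 (rightD_le_slope hA huI ⟨hu2.2, hz.2.le⟩)
    have h2 : Filter.Tendsto (fun n => (Aseq n z - Aseq n u) / (z - u)) Filter.atTop
        (nhds ((A z - A u) / (z - u))) :=
      ((pt z ⟨hz.1.le, hz.2.le⟩).sub (pt u ⟨huI.1.le, huI.2.le⟩)).div_const _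
    filter_upwards [h2.eventually (eventually_gt_nhds h1)] with n hn
    exact lt_of_lt_of_le hn (slope_le_rightD (hAseq n) ⟨huI.1.le, huI.2.le⟩ hz hu2.2)
  · -- rightD A z < c : eventually rightD (Aseq n) z < c
    have hne : ((fun y => (A y - A z) / (y - z)) '' Set.Ioc z 1).Nonempty :=
      ⟨_, Set.mem_image_of_mem _ (⟨hz.2, le_refl 1⟩ : (1:ℝ) ∈ Set.Ioc z 1)⟩
    obtain ⟨s, hs, hslt⟩ := exists_lt_of_csInf_lt hne (show sInf _ < c from hc')
    obtain ⟨w, hw, rfl⟩ := hs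
    have h2 : Filter.Tendsto (fun n => (Aseq n w - Aseq n z) / (w - z)) Filter.atTop
        (nhds ((A w - A z) / (w - z))) :=
      ((pt w ⟨by linarith [hz.1, hw.1], hw.2⟩).sub (pt z ⟨hz.1.le, hz.2.le⟩)).div_const _
    filter_upwards [h2.eventually (eventually_lt_nhds hslt)] with n hn
    exact lt_of_le_of_lt (rightD_le_slope (hAseq n) hz hw) hn

lemma countable_discont {f : ℝ → ℝ} (hmono : MonotoneOn f (Set.Ioo (0:ℝ) 1)) :
    Set.Countable {t | t ∈ Set.Ioo (0:ℝ) 1 ∧ ¬ ContinuousAt f t} := by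
  have key : ∀ n : ℕ, Set.Countable
      {t | t ∈ Set.Ioo (1/(n+2) : ℝ) (1 - 1/(n+2)) ∧ ¬ ContinuousAt f t} := by
    intro n
    set a : ℝ := 1/(n+2) with ha_def
    set b : ℝ := 1 - 1/(n+2) with hb_def
    have ha : 0 < a := by positivity
    have han : a ≤ 1/2 := by
      rw [ha_def]
      apply div_le_div_of_nonneg_left (by norm_num) (by norm_num)
      · linarith
    have hab : a ≤ b := by rw [hb_def]; linarith
    have hb1 : b < 1 := by rw [hb_def]; linarith
    have hclampmem : ∀ t : ℝ, min (max t a) b ∈ Set.Ioo (0:ℝ) 1 := by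
      intro t
      constructor
      · have : a ≤ min (max t a) b := le_min (le_max_right _ _) hab
        linarith
      · exact lt_of_le_of_lt (min_le_right _ _) hb1
    set g : ℝ → ℝ := fun t => f (min (max t a) b) with hg_def
    have hg : Monotone g := by
      intro s t hst
      exact hmono (hclampmem s) (hclampmem t)
        (min_le_min (max_le_max hst (le_refl a)) (le_refl b))
    apply (hg.countable_not_continuousAt).mono
    rintro t ⟨ht, hnc⟩
    simp only [Set.mem_setOf_eq]
    intro hcg
    apply hnc
    have heq : g =ᶠ[nhds t] f := by
      filter_upwards [Ioo_mem_nhds ht.1 ht.2] with u hu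
      rw [hg_def]
      simp only
      rw [max_eq_left hu.1.le, min_eq_left hu.2.le]
    exact hcg.congr heq
  apply Set.Countable.mono _ (Set.countable_iUnion key)
  rintro t ⟨htI, htc⟩
  have hpos : 0 < min t (1 - t) := lt_min htI.1 (by linarith [htI.2])
  obtain ⟨n, hn⟩ := exists_nat_one_div_lt hpos
  have h12 : (1:ℝ)/(n+2) < 1/(n+1) := by
    apply div_lt_div_of_pos_left (by norm_num) (by positivity)
    linarith
  refine Set.mem_iUnion.2 ⟨n, ⟨?_, ?_⟩, htc⟩
  · calc (1:ℝ)/(n+2) < 1/(n+1) := h12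
      _ < min t (1-t) := by exact_mod_cast hn
      _ ≤ t := min_le_left _ _
  · have : (1:ℝ)/(n+2) < 1 - t := by
      calc (1:ℝ)/(n+2) < 1/(n+1) := h12
        _ < min t (1-t) := by exact_mod_cast hn
        _ ≤ 1 - t := min_le_right _ _
    linarith

/-- For Extreme Value copulas converging pointwise to an Extreme Value
copula: for every `x ∈ (0,1)` the set `U_x = {y ∈ (0,1) : log x / log(xy) ∈ Cont(D⁺A)}`
has full Lebesgue measure in (hence is dense in) `[0,1]`, and the Markov kernels converge,
`K_{C_n}(x,[0,y]) → K_C(x,[0,y])`, for every `y ∈ U_x`. -/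
theorem stmt15 (A : ℝ → ℝ) (Aseq : ℕ → ℝ → ℝ)
    (hA : IsPickands A) (hAseq : ∀ n, IsPickands (Aseq n))
    (hconv : ∀ x ∈ Set.Icc (0:ℝ) 1, ∀ y ∈ Set.Icc (0:ℝ) 1,
      Filter.Tendsto (fun n => evCopula (Aseq n) x y) Filter.atTop
        (nhds (evCopula A x y))) :
    ∀ x ∈ Set.Ioo (0:ℝ) 1,
      volume {y | y ∈ Set.Ioo (0:ℝ) 1 ∧ Real.log x / Real.log (x * y) ∈ ContDA A} = 1 ∧
      Set.Icc (0:ℝ) 1 ⊆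
        closure {y | y ∈ Set.Ioo (0:ℝ) 1 ∧ Real.log x / Real.log (x * y) ∈ ContDA A} ∧
      ∀ y ∈ {y | y ∈ Set.Ioo (0:ℝ) 1 ∧ Real.log x / Real.log (x * y) ∈ ContDA A},
        Filter.Tendsto (fun n => evKernel (Aseq n) x y) Filter.atTop
          (nhds (evKernel A x y)) := by
  intro x hx
  have hx1 : (0:ℝ) < x := hx.1
  have hx2 : x < 1 := hx.2
  set a : ℝ := Real.log x with ha_def
  have ha : a < 0 := Real.log_neg hx1 hx2
  -- basic facts about z(y) = log x / log (x*y)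
  have hlogxy : ∀ y ∈ Set.Ioo (0:ℝ) 1, Real.log (x * y) = a + Real.log y := by
    intro y hy
    rw [Real.log_mul hx1.ne' hy.1.ne', ha_def]
  have hbneg : ∀ y ∈ Set.Ioo (0:ℝ) 1, Real.log (x * y) < a := by
    intro y hy
    rw [hlogxy y hy]
    linarith [Real.log_neg hy.1 hy.2]
  have hzmem : ∀ y ∈ Set.Ioo (0:ℝ) 1, Real.log x / Real.log (x * y) ∈ Set.Ioo (0:ℝ) 1 := by
    intro y hy
    have hb : Real.log (x * y) < a := hbneg y hy
    have hb0 : Real.log (x * y) < 0 := hb.trans ha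
    constructor
    · exact div_pos_of_neg_of_neg ha hb0
    · have h1 : a / Real.log (x * y) - 1 < 0 := by
        rw [div_sub_one hb0.ne]
        exact div_neg_of_pos_of_neg (by linarith) hb0
      rw [← ha_def]; linarith
  -- the bad set
  have hmono : MonotoneOn (rightD A) (Set.Ioo (0:ℝ) 1) := rightD_monoOn hA.1
  have hBcnt := countable_discont hmono
  set B : Set ℝ := {t | t ∈ Set.Ioo (0:ℝ) 1 ∧ ¬ ContinuousAt (rightD A) t} with hB_def
  set badY : Set ℝ := {y | y ∈ Set.Ioo (0:ℝ) 1 ∧ Real.log x / Real.log (x * y) ∈ B}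
    with hbadY_def
  have hbadYcnt : Set.Countable badY := by
    apply Set.Countable.mono _ (hBcnt.image (fun t => Real.exp (a / t - a)))
    rintro y ⟨hy, hzB⟩
    refine ⟨_, hzB, ?_⟩
    have hb0 : Real.log (x * y) < 0 := (hbneg y hy).trans ha
    have hz0 : Real.log x / Real.log (x * y) ≠ 0 := (hzmem y hy).1.ne'
    have key : a / (Real.log x / Real.log (x * y)) = Real.log (x * y) := by
      rw [ha_def]
      rw [div_div_eq_mul_div, mul_comm, mul_div_assoc, div_self (Real.log_neg hx1 hx2).ne,
        mul_one]
    show Real.exp (a / (Real.log x / Real.log (x * y)) - a) = y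
    rw [key, hlogxy y hy]
    have : a + Real.log y - a = Real.log y := by ring
    rw [this, Real.exp_log hy.1]
  -- the good set equals Ioo \ badY
  set S : Set ℝ := {y | y ∈ Set.Ioo (0:ℝ) 1 ∧ Real.log x / Real.log (x * y) ∈ ContDA A}
    with hS_def
  have hSeq : S = Set.Ioo (0:ℝ) 1 \ badY := by
    ext y
    simp only [hS_def, hbadY_def, hB_def, ContDA, Set.mem_setOf_eq, Set.mem_diff]
    constructor
    · rintro ⟨hy, _, hcont⟩
      exact ⟨hy, fun h => h.2.2 hcont⟩
    · rintro ⟨hy, hnb⟩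
      refine ⟨hy, hzmem y hy, ?_⟩
      by_contra hnc
      exact hnb ⟨hy, hzmem y hy, hnc⟩
  refine ⟨?_, ?_, ?_⟩
  · -- measure 1
    rw [hSeq, measure_diff_null (hbadYcnt.measure_zero volume)]
    simp [Real.volume_Ioo]
  · -- density
    have hdense : Dense badYᶜ := hbadYcnt.dense_compl ℝ
    have h1 : Set.Ioo (0:ℝ) 1 ⊆ closure (Set.Ioo (0:ℝ) 1 ∩ badYᶜ) :=
      hdense.open_subset_closure_inter isOpen_Ioo
    have h2 : Set.Ioo (0:ℝ) 1 ∩ badYᶜ = S := by rw [hSeq, Set.diff_eq]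
    rw [h2] at h1
    calc Set.Icc (0:ℝ) 1 = closure (Set.Ioo (0:ℝ) 1) := (closure_Ioo (by norm_num)).symm
      _ ⊆ closure (closure S) := closure_mono h1
      _ = closure S := closure_closure
  · -- kernel convergence
    rintro y ⟨hy, hzIoo, hzcont⟩
    have hpt := ptconv hA hAseq hconv
    have hD := rightD_tendsto hA.1 (fun n => (hAseq n).1) hpt hzIoo hzcont
    have hAz := hpt _ ⟨hzIoo.1.le, hzIoo.2.le⟩
    have hC := hconv x ⟨hx1.le, hx2.le⟩ y ⟨hy.1.le, hy.2.le⟩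
    have hxc : 0 < x ∧ x < 1 := ⟨hx1, hx2⟩
    have hyc : 0 < y ∧ y < 1 := ⟨hy.1, hy.2⟩
    simp only [evKernel, if_pos hxc, if_pos hyc]
    exact hC.mul (((hD.mul_const _).div_const _).add (hAz.div_const _))
end
end

section
/- Let C, C₁, C₂, … be bivariate Extreme Value copulas with Pickands dependence functions A, A₁, A₂, …, respectively, and suppose A_n(x) → A(x) for all x ∈ [0,1]. Then lim_{n→∞} ζ₁(C_n) = ζ₁(C) and lim_{n→∞} r(C_n) = r(C). In other words, within the class of Extreme Value copulas both ζ₁ and r are continuous with respect to pointwise convergence of the Pickands dependence functions. -/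
open MeasureTheory Filter Set
open scoped ENNReal

noncomputable section

/-!
On `(0,1)²` the kernel of `C_A` equals `(xy)^(A z - z) (A z + (1 - z) D⁺A(z))` with
`z = log x / log (xy)`, and it takes values in `[0,1]`. Pointwise convergence of convex functions
forces `D⁺A_n(z) → D⁺A(z)` at every continuity point `z` of the monotone function `D⁺A`, i.e. off a
countable set; as `x ↦ z` is injective for fixed `y`, the kernels converge for almost every `x`.
Both `ζ₁` and `r` are double integrals of a continuous function of `(K_C(x,[0,y]), y)`, so dominated
convergence, applied to the inner and then to the outer integral, gives the claim.
-/

open Real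

lemma measurable_indicator_of_measurable_domRestrict {α β : Type*} [MeasurableSpace α]
    [MeasurableSpace β] [Zero β] {s : Set α} {f : α → β} (hs : MeasurableSet s)
    (hf : Measurable (s.domRestrict f)) : Measurable (s.indicator f) := by
  refine measurable_of_restrict_of_restrict_compl hs ?_ ?_
  · convert hf using 1
    funext x
    exact indicator_of_mem x.2 f
  · convert (measurable_const : Measurable fun _ : (sᶜ : Set α) => (0 : β)) using 1
    funext x
    exact indicator_of_notMem x.2 f

theorem tendsto_integral_integral_of_dominated {α β E : Type*} [MeasurableSpace α]
    [MeasurableSpace β] [NormedAddCommGroup E] [NormedSpace ℝ E] {μ : Measure α} {ν : Measure β}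
    [IsFiniteMeasure μ] [IsFiniteMeasure ν] {F : ℕ → α → β → E} {G : α → β → E} {C : ℝ}
    (hF : ∀ n, StronglyMeasurable (Function.uncurry (F n)))
    (hbound : ∀ n, ∀ᵐ y ∂ν, ∀ᵐ x ∂μ, ‖F n x y‖ ≤ C)
    (hlim : ∀ᵐ y ∂ν, ∀ᵐ x ∂μ, Tendsto (fun n => F n x y) atTop (nhds (G x y))) :
    Tendsto (fun n => ∫ y, ∫ x, F n x y ∂μ ∂ν) atTop (nhds (∫ y, ∫ x, G x y ∂μ ∂ν)) := by
  refine tendsto_integral_of_dominated_convergence (fun _ => C * μ.real univ)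
    (fun n => (hF n).integral_prod_left.aestronglyMeasurable) (integrable_const _)
    (fun n => (hbound n).mono fun y hy => norm_integral_le_of_norm_le_const hy) ?_
  filter_upwards [hlim, ae_all_iff.2 hbound] with y hy hby
  exact tendsto_integral_of_dominated_convergence (fun _ => C)
    (fun n => ((hF n).comp_measurable measurable_prodMk_right).aestronglyMeasurable)
    (integrable_const _) hby hy

namespace ConvexOn

variable {f : ℝ → ℝ} {w x y : ℝ}

lemma bddBelow_rightSlopes (hf : ConvexOn ℝ (Icc 0 1) f) (hx : x ∈ Ioo 0 1) :
    BddBelow ((fun y => (f y - f x) / (y - x)) '' Ioc x 1) := by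
  refine ⟨(f x - f 0) / (x - 0), ?_⟩
  rintro _ ⟨y, hy, rfl⟩
  exact hf.slope_mono_adjacent ⟨le_rfl, zero_le_one⟩ ⟨(hx.1.trans hy.1).le, hy.2⟩ hx.1 hy.1

lemma rightD_le_slope_s17 (hf : ConvexOn ℝ (Icc 0 1) f) (hx : x ∈ Ioo 0 1) (hy : y ∈ Ioc x 1) :
    rightD f x ≤ (f y - f x) / (y - x) :=
  csInf_le (hf.bddBelow_rightSlopes hx) (mem_image_of_mem _ hy)

lemma slope_le_rightD_s17 (hf : ConvexOn ℝ (Icc 0 1) f) (hw : 0 ≤ w) (hwx : w < x) (hx : x < 1) :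
    (f x - f w) / (x - w) ≤ rightD f x := by
  refine le_csInf ((nonempty_Ioc.2 hx).image _) ?_
  rintro _ ⟨y, hy, rfl⟩
  exact hf.slope_mono_adjacent ⟨hw, (hwx.trans hx).le⟩ ⟨hw.trans (hwx.trans hy.1).le, hy.2⟩
    hwx hy.1

lemma monotoneOn_rightD_s17 (hf : ConvexOn ℝ (Icc 0 1) f) : MonotoneOn (rightD f) (Ioo 0 1) := by
  intro s hs t ht hst
  rcases hst.eq_or_lt with rfl | hlt
  · rfl
  · exact (hf.rightD_le_slope_s17 hs ⟨hlt, ht.2.le⟩).trans (hf.slope_le_rightD_s17 hs.1.le hlt ht.2)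

lemma countable_Ioo_diff_contDA (hf : ConvexOn ℝ (Icc 0 1) f) :
    (Ioo 0 1 \ ContDA f).Countable := by
  refine hf.monotoneOn_rightD_s17.countable_not_continuousWithinAt.mono ?_
  rintro x ⟨hx, hxc⟩
  exact ⟨hx, fun h => hxc ⟨hx, h.continuousAt (Ioo_mem_nhds hx.1 hx.2)⟩⟩

lemma measurable_Ioo_indicator_rightD (hf : ConvexOn ℝ (Icc 0 1) f) :
    Measurable ((Ioo 0 1).indicator (rightD f)) := by
  have hmono : Monotone ((Ioo 0 1).domRestrict (rightD f)) := fun s t hst =>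
    hf.monotoneOn_rightD_s17 s.2 t.2 hst
  exact measurable_indicator_of_measurable_domRestrict measurableSet_Ioo hmono.measurable

lemma measurable_Ioo_indicator (hf : ConvexOn ℝ (Icc 0 1) f) :
    Measurable ((Ioo 0 1).indicator f) := by
  have hcont : ContinuousOn f (Ioo 0 1) := by
    simpa only [interior_Icc] using hf.continuousOn_interior
  exact measurable_indicator_of_measurable_domRestrict measurableSet_Ioo
    hcont.domRestrict.measurable

/-- The lower bound uses left-continuity of `D⁺f` at `x`; the upper bound only that `D⁺f x` is an
infimum of right slopes, each of which converges. -/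
theorem tendsto_rightD_s17 {fs : ℕ → ℝ → ℝ} (hf : ConvexOn ℝ (Icc 0 1) f)
    (hfs : ∀ n, ConvexOn ℝ (Icc 0 1) (fs n))
    (hconv : ∀ x ∈ Icc (0 : ℝ) 1, Tendsto (fun n => fs n x) atTop (nhds (f x)))
    (hx : x ∈ ContDA f) : Tendsto (fun n => rightD (fs n) x) atTop (nhds (rightD f x)) := by
  obtain ⟨⟨hx0, hx1⟩, hcont⟩ := hx
  have tendsto_slope : ∀ {a b}, a ∈ Icc (0 : ℝ) 1 → b ∈ Icc (0 : ℝ) 1 →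
      Tendsto (fun n => (fs n b - fs n a) / (b - a)) atTop (nhds ((f b - f a) / (b - a))) :=
    fun ha hb => ((hconv _ hb).sub (hconv _ ha)).div_const _
  refine tendsto_order.2 ⟨fun a ha => ?_, fun b hb => ?_⟩
  · obtain ⟨w, hwx, hw0, hwa⟩ :=
      ((eventually_gt_nhds hx0).and (hcont.eventually (lt_mem_nhds ha))).exists_lt
    have hslope : a < (f x - f w) / (x - w) :=
      hwa.trans_le (hf.rightD_le_slope_s17 ⟨hw0, hwx.trans hx1⟩ ⟨hwx, hx1.le⟩)
    filter_upwards [(tendsto_slope ⟨hw0.le, (hwx.trans hx1).le⟩ ⟨hx0.le, hx1.le⟩).eventually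
      (lt_mem_nhds hslope)] with n hn
    exact hn.trans_le ((hfs n).slope_le_rightD_s17 hw0.le hwx hx1)
  · obtain ⟨_, ⟨y, hy, rfl⟩, hyb⟩ := exists_lt_of_csInf_lt ((nonempty_Ioc.2 hx1).image _) hb
    filter_upwards [(tendsto_slope ⟨hx0.le, hx1.le⟩ ⟨(hx0.trans hy.1).le, hy.2⟩).eventually
      (gt_mem_nhds hyb)] with n hn
    exact ((hfs n).rightD_le_slope_s17 ⟨hx0, hx1⟩ hy).trans_lt hn

end ConvexOn

/-- The paper's `z`. -/
def evArg (x y : ℝ) : ℝ := log x / log (x * y)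

/-- The kernel of `C_A` with `a = A` and `d = D⁺A` as parameters. They enter only through their
values on `(0,1)`, so replacing them by their indicators on `(0,1)` makes the kernel measurable. -/
def evKernelOf (a d : ℝ → ℝ) (x y : ℝ) : ℝ :=
  if 0 < x ∧ x < 1 then
    if 0 < y ∧ y < 1 then
      (x * y) ^ (a (evArg x y) - evArg x y) * (a (evArg x y) + (1 - evArg x y) * d (evArg x y))
    else y
  else 1

section Kernel

variable {x y : ℝ}

lemma log_mul_of_mem_Ioo (hx : x ∈ Ioo (0 : ℝ) 1) (hy : y ∈ Ioo (0 : ℝ) 1) :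
    log (x * y) = log x + log y :=
  log_mul hx.1.ne' hy.1.ne'

lemma evArg_mem_Ioo (hx : x ∈ Ioo (0 : ℝ) 1) (hy : y ∈ Ioo (0 : ℝ) 1) :
    evArg x y ∈ Ioo (0 : ℝ) 1 := by
  have hu := log_neg hx.1 hx.2
  have hv := log_neg hy.1 hy.2
  rw [evArg, log_mul_of_mem_Ioo hx hy]
  exact ⟨div_pos_of_neg_of_neg hu (by linarith), (div_lt_one_of_neg (by linarith)).2 (by linarith)⟩

lemma rpow_evArg (hx : x ∈ Ioo (0 : ℝ) 1) (hy : y ∈ Ioo (0 : ℝ) 1) : (x * y) ^ evArg x y = x := by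
  have hs : log (x * y) ≠ 0 := by
    rw [log_mul_of_mem_Ioo hx hy]; linarith [log_neg hx.1 hx.2, log_neg hy.1 hy.2]
  rw [rpow_def_of_pos (mul_pos hx.1 hy.1), evArg, mul_div_cancel₀ _ hs, exp_log hx.1]

lemma injOn_evArg (hy : y ∈ Ioo (0 : ℝ) 1) : InjOn (evArg · y) (Ioo 0 1) := by
  intro x₁ hx₁ x₂ hx₂ heq
  have hv := log_neg hy.1 hy.2
  have h₁ := log_neg hx₁.1 hx₁.2
  have h₂ := log_neg hx₂.1 hx₂.2
  simp only [evArg, log_mul_of_mem_Ioo hx₁ hy, log_mul_of_mem_Ioo hx₂ hy] at heq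
  rw [div_eq_div_iff (by linarith) (by linarith)] at heq
  have hlog : log x₁ = log x₂ := by nlinarith
  exact log_injOn_pos hx₁.1 hx₂.1 hlog

lemma evKernel_eq_evKernelOf (A : ℝ → ℝ) : evKernel A = evKernelOf A (rightD A) := by
  funext x y
  unfold evKernel evKernelOf
  split_ifs with hx hy
  · have hs : log x + log y ≠ 0 := by linarith [log_neg hx.1 hx.2, log_neg hy.1 hy.2]
    rw [evCopula, if_pos ⟨hx, hy⟩, rpow_sub (mul_pos hx.1 hy.1), rpow_evArg hx hy, evArg,
      log_mul_of_mem_Ioo hx hy]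
    field_simp
    ring
  all_goals rfl

lemma evKernelOf_congr {a a' d d' : ℝ → ℝ} (ha : EqOn a a' (Ioo 0 1)) (hd : EqOn d d' (Ioo 0 1)) :
    evKernelOf a d = evKernelOf a' d' := by
  funext x y
  unfold evKernelOf
  split_ifs with hx hy
  · rw [ha (evArg_mem_Ioo hx hy), hd (evArg_mem_Ioo hx hy)]
  all_goals rfl

lemma measurable_evKernelOf {a d : ℝ → ℝ} (ha : Measurable a) (hd : Measurable d) :
    Measurable (Function.uncurry (evKernelOf a d)) := by
  have hz : Measurable fun p : ℝ × ℝ => evArg p.1 p.2 :=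
    (measurable_log.comp measurable_fst).div
      (measurable_log.comp (measurable_fst.mul measurable_snd))
  refine Measurable.ite (measurableSet_Ioo.preimage measurable_fst)
    (Measurable.ite (measurableSet_Ioo.preimage measurable_snd) ?_ measurable_snd) measurable_const
  exact ((measurable_fst.mul measurable_snd).pow ((ha.comp hz).sub hz)).mul
    ((ha.comp hz).add ((measurable_const.sub hz).mul (hd.comp hz)))

lemma evKernelOf_mem_Icc {a d : ℝ → ℝ}
    (had : ∀ z ∈ Ioo (0 : ℝ) 1, z ≤ a z ∧ a z + (1 - z) * d z ∈ Icc 0 1)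
    (hy : y ∈ Icc (0 : ℝ) 1) : evKernelOf a d x y ∈ Icc 0 1 := by
  unfold evKernelOf
  split_ifs with hx' hy'
  · obtain ⟨hza, hb⟩ := had _ (evArg_mem_Ioo hx' hy')
    have hxy : x * y ∈ Ioo (0 : ℝ) 1 :=
      ⟨mul_pos hx'.1 hy'.1, mul_lt_one_of_nonneg_of_lt_one_left hx'.1.le hx'.2 hy'.2.le⟩
    have hpow : (x * y) ^ (a (evArg x y) - evArg x y) ∈ Icc (0 : ℝ) 1 :=
      ⟨rpow_nonneg hxy.1.le _, rpow_le_one hxy.1.le hxy.2.le (by linarith)⟩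
    exact ⟨mul_nonneg hpow.1 hb.1, mul_le_one₀ hpow.2 hb.1 hb.2⟩
  · exact hy
  · exact ⟨zero_le_one, le_rfl⟩

lemma tendsto_evKernelOf {a d : ℕ → ℝ → ℝ} {a₀ d₀ : ℝ → ℝ}
    (hx : x ∈ Ioo (0 : ℝ) 1) (hy : y ∈ Ioo (0 : ℝ) 1)
    (ha : Tendsto (fun n => a n (evArg x y)) atTop (nhds (a₀ (evArg x y))))
    (hd : Tendsto (fun n => d n (evArg x y)) atTop (nhds (d₀ (evArg x y)))) :
    Tendsto (fun n => evKernelOf (a n) (d n) x y) atTop (nhds (evKernelOf a₀ d₀ x y)) := by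
  have hx' : 0 < x ∧ x < 1 := hx
  have hy' : 0 < y ∧ y < 1 := hy
  simp only [evKernelOf, if_pos hx', if_pos hy']
  exact (tendsto_const_nhds.rpow (ha.sub_const _) (Or.inl (mul_pos hx.1 hy.1).ne')).mul
    (ha.add (hd.const_mul _))

end Kernel

namespace ConvexOn

variable {f : ℝ → ℝ} {fs : ℕ → ℝ → ℝ} {y : ℝ}

lemma measurable_evKernel (hf : ConvexOn ℝ (Icc 0 1) f) :
    Measurable (Function.uncurry (evKernel f)) := by
  have hind : ∀ g : ℝ → ℝ, EqOn g ((Ioo 0 1).indicator g) (Ioo 0 1) :=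
    fun g _ hz => (indicator_of_mem hz g).symm
  rw [evKernel_eq_evKernelOf, evKernelOf_congr (hind f) (hind (rightD f))]
  exact measurable_evKernelOf hf.measurable_Ioo_indicator hf.measurable_Ioo_indicator_rightD

lemma ae_tendsto_evKernel (hf : ConvexOn ℝ (Icc 0 1) f) (hfs : ∀ n, ConvexOn ℝ (Icc 0 1) (fs n))
    (hconv : ∀ x ∈ Icc (0 : ℝ) 1, Tendsto (fun n => fs n x) atTop (nhds (f x)))
    (hy : y ∈ Ioo (0 : ℝ) 1) :
    ∀ᵐ x ∂volume.restrict (Ioo 0 1),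
      Tendsto (fun n => evKernel (fs n) x y) atTop (nhds (evKernel f x y)) := by
  have hbad : {x ∈ Ioo (0 : ℝ) 1 | evArg x y ∉ ContDA f}.Countable :=
    MapsTo.countable_of_injOn (f := (evArg · y)) (t := Ioo 0 1 \ ContDA f)
      (fun _ hx => ⟨evArg_mem_Ioo hx.1 hy, hx.2⟩)
      ((injOn_evArg hy).mono fun _ hx => hx.1) hf.countable_Ioo_diff_contDA
  filter_upwards [ae_restrict_mem measurableSet_Ioo, ae_restrict_of_ae (hbad.ae_notMem volume)]
    with x hx hgood
  have hz : evArg x y ∈ ContDA f := by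
    by_contra h
    exact hgood ⟨hx, h⟩
  simp only [evKernel_eq_evKernelOf]
  exact tendsto_evKernelOf hx hy (hconv _ (Ioo_subset_Icc_self hz.1))
    (hf.tendsto_rightD_s17 hfs hconv hz)

end ConvexOn

namespace IsPickands

variable {A : ℝ → ℝ} {z : ℝ}

lemma self_le (hA : IsPickands A) (hz : z ∈ Icc (0 : ℝ) 1) : z ≤ A z :=
  (le_max_right _ _).trans (hA.2.2.2 z hz).1

lemma add_mul_rightD_mem_Icc (hA : IsPickands A) (hz : z ∈ Ioo (0 : ℝ) 1) :
    A z + (1 - z) * rightD A z ∈ Icc 0 1 := by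
  obtain ⟨hconvex, hA0, hA1, hbound⟩ := hA
  have h1z : 1 - z ≤ A z := (le_max_left _ _).trans (hbound z (Ioo_subset_Icc_self hz)).1
  have hlow : -1 ≤ rightD A z := by
    refine le_trans ?_ (hconvex.slope_le_rightD_s17 le_rfl hz.1 hz.2)
    rw [hA0, sub_zero, le_div_iff₀ hz.1]
    linarith
  have hup := hconvex.rightD_le_slope_s17 hz ⟨hz.2, le_rfl⟩
  rw [hA1, le_div_iff₀ (by linarith [hz.2])] at hup
  constructor <;> nlinarith [hz.2]

lemma evKernel_mem_Icc (hA : IsPickands A) {x y : ℝ} (hy : y ∈ Icc (0 : ℝ) 1) :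
    evKernel A x y ∈ Icc 0 1 := by
  rw [evKernel_eq_evKernelOf]
  exact evKernelOf_mem_Icc
    (fun z hz => ⟨hA.self_le (Ioo_subset_Icc_self hz), hA.add_mul_rightD_mem_Icc hz⟩) hy

end IsPickands

theorem tendsto_integral_integral_comp_evKernel {A : ℝ → ℝ} {Aseq : ℕ → ℝ → ℝ}
    (hA : ConvexOn ℝ (Icc 0 1) A) (hAseq : ∀ n, IsPickands (Aseq n))
    (hconv : ∀ x ∈ Icc (0 : ℝ) 1, Tendsto (fun n => Aseq n x) atTop (nhds (A x)))
    {φ : ℝ → ℝ → ℝ} (hφ : Continuous (Function.uncurry φ)) :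
    Tendsto (fun n => ∫ y in Icc (0 : ℝ) 1, ∫ x in Icc (0 : ℝ) 1, φ (evKernel (Aseq n) x y) y)
      atTop (nhds (∫ y in Icc (0 : ℝ) 1, ∫ x in Icc (0 : ℝ) 1, φ (evKernel A x y) y)) := by
  obtain ⟨C, hC⟩ := (isCompact_Icc.prod isCompact_Icc).exists_bound_of_continuousOn
    hφ.continuousOn (s := Icc (0 : ℝ) 1 ×ˢ Icc (0 : ℝ) 1)
  rw [← Measure.restrict_congr_set Ioo_ae_eq_Icc]
  refine tendsto_integral_integral_of_dominated (C := C) (fun n => ?_) (fun n => ?_) ?_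
  · exact (hφ.measurable.comp
      ((hAseq n).1.measurable_evKernel.prodMk measurable_snd)).stronglyMeasurable
  · filter_upwards [ae_restrict_mem measurableSet_Ioo] with y hy
    exact .of_forall fun x =>
      hC (_, y) ⟨(hAseq n).evKernel_mem_Icc (Ioo_subset_Icc_self hy), Ioo_subset_Icc_self hy⟩
  · filter_upwards [ae_restrict_mem measurableSet_Ioo] with y hy
    filter_upwards [hA.ae_tendsto_evKernel (fun n => (hAseq n).1) hconv hy] with x hx
    exact (hφ.tendsto _).comp (hx.prodMk_nhds tendsto_const_nhds)

/-- For Extreme Value copulas whose Pickands dependence functions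
converge pointwise on `[0,1]`, the dependence measures `ζ₁` and `r` of the copulas
converge: `ζ₁(C_n) → ζ₁(C)` and `r(C_n) → r(C)`. -/
theorem stmt17 (A : ℝ → ℝ) (Aseq : ℕ → ℝ → ℝ)
    (hA : IsPickands A) (hAseq : ∀ n, IsPickands (Aseq n))
    (hconv : ∀ x ∈ Set.Icc (0:ℝ) 1,
      Filter.Tendsto (fun n => Aseq n x) Filter.atTop (nhds (A x))) :
    Filter.Tendsto (fun n => zeta1 (evKernel (Aseq n))) Filter.atTop
        (nhds (zeta1 (evKernel A))) ∧
      Filter.Tendsto (fun n => rdep (evKernel (Aseq n))) Filter.atTop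
        (nhds (rdep (evKernel A))) := by
  have key := @tendsto_integral_integral_comp_evKernel A Aseq hA.1 hAseq hconv
  exact ⟨(key (φ := fun k y => |k - y|) (by fun_prop)).const_mul 3,
    ((key (φ := fun k _ => k ^ 2) (by fun_prop)).const_mul 6).sub_const 2⟩
end
end

section
/- Let C, C₁, C₂, … be absolutely continuous bivariate copulas with densities k, k₁, k₂, … (with respect to two-dimensional Lebesgue measure λ₂ on [0,1]²), and suppose k_n → k λ₂-almost everywhere. Then (C_n) converges weakly conditional to C; concretely, for λ-almost every x ∈ [0,1] and every y ∈ [0,1], ∫_{[0,y]} k_n(x,s) dλ(s) → ∫_{[0,y]} k(x,s) dλ(s), i.e. the Markov kernels K_{C_n}(x,·) given by K_{C_n}(x,[0,y]) = ∫_{[0,y]} k_n(x,s) dλ(s) converge weakly to K_C(x,·) for λ-almost every x. -/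
/-!
By Scheffé's lemma, a.e. convergence of probability densities implies their `L¹`-convergence,
hence convergence of their integrals over every set. By Fubini, a.e. convergence of `k_n` on
the square gives, for a.e. `x`, a.e. convergence of the slices `k_n(x,·) → k(x,·)`; and since
both margins of a copula are uniform, for a.e. `x` these slices are probability densities on
`[0,1]`. Scheffé's lemma then applies slice by slice.
-/

open MeasureTheory Filter Set
open scoped ENNReal

noncomputable section

/-- `C` is a bivariate copula (all conditions imposed on the unit square `[0,1]²`). -/
def IsCopula (C : ℝ → ℝ → ℝ) : Prop :=
  (∀ x ∈ Set.Icc (0:ℝ) 1, C x 0 = 0 ∧ C 0 x = 0 ∧ C x 1 = x ∧ C 1 x = x) ∧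
    ∀ x₁ ∈ Set.Icc (0:ℝ) 1, ∀ x₂ ∈ Set.Icc (0:ℝ) 1, ∀ y₁ ∈ Set.Icc (0:ℝ) 1,
      ∀ y₂ ∈ Set.Icc (0:ℝ) 1, x₁ ≤ x₂ → y₁ ≤ y₂ →
        0 ≤ C x₂ y₂ - C x₂ y₁ - C x₁ y₂ + C x₁ y₁

/-- `K` (as conditional distribution function `(x,y) ↦ K(x,[0,y])`) is a Markov kernel of
the copula `C`, i.e. a regular conditional distribution of the second coordinate given the
first under `μ_C`: for each `x ∈ [0,1]`, `K x` is the distribution function of a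
probability measure on `[0,1]`, `x ↦ K x y` is measurable, and the disintegration identity
`∫_{[0,a]} K(t,[0,y]) dλ(t) = μ_C([0,a] × [0,y]) = C(a,y)` holds. -/
structure IsMarkovKernelOf (C : ℝ → ℝ → ℝ) (K : ℝ → ℝ → ℝ) : Prop where
  meas : ∀ y ∈ Set.Icc (0:ℝ) 1, Measurable fun x => K x y
  mono : ∀ x ∈ Set.Icc (0:ℝ) 1, MonotoneOn (K x) (Set.Icc (0:ℝ) 1)
  nonneg : ∀ x ∈ Set.Icc (0:ℝ) 1, ∀ y ∈ Set.Icc (0:ℝ) 1, 0 ≤ K x y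
  apply_one : ∀ x ∈ Set.Icc (0:ℝ) 1, K x 1 = 1
  disint : ∀ a ∈ Set.Icc (0:ℝ) 1, ∀ y ∈ Set.Icc (0:ℝ) 1,
    ∫ t in Set.Icc (0:ℝ) a, K t y = C a y

open Topology

section Scheffe

variable {α : Type*} [MeasurableSpace α] {μ : Measure α}

theorem tendsto_lintegral_enorm_sub_of_tendsto_ae {f : ℕ → α → ℝ} {g : α → ℝ}
    (hf : ∀ n, Integrable (f n) μ) (hg : Integrable g μ) (hf_nonneg : ∀ n, 0 ≤ᵐ[μ] f n)
    (h_integral : ∀ n, ∫ a, f n a ∂μ = ∫ a, g a ∂μ)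
    (h_lim : ∀ᵐ a ∂μ, Tendsto (fun n ↦ f n a) atTop (𝓝 (g a))) :
    Tendsto (fun n ↦ ∫⁻ a, ‖f n a - g a‖ₑ ∂μ) atTop (𝓝 0) := by
  have h_neg : Tendsto (fun n ↦ ∫ a, max (g a - f n a) 0 ∂μ) atTop (𝓝 (∫ _, (0:ℝ) ∂μ)) := by
    refine tendsto_integral_of_dominated_convergence (fun a ↦ |g a|)
      (fun n ↦ (hg.sub (hf n)).pos_part.aestronglyMeasurable) hg.abs (fun n ↦ ?_) ?_
    · filter_upwards [hf_nonneg n] with a (ha : 0 ≤ f n a)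
      rw [Real.norm_of_nonneg (le_max_right _ _)]
      exact max_le (by linarith [le_abs_self (g a), ha]) (abs_nonneg _)
    · filter_upwards [h_lim] with a ha
      simpa using ((tendsto_const_nhds (x := g a)).sub ha).max (tendsto_const_nhds (x := (0:ℝ)))
  -- `|f_n - g| = (f_n - g) + 2 (g - f_n)⁺`, and `f_n - g` integrates to `0`.
  have h_abs : ∀ n, ∫ a, ‖f n a - g a‖ ∂μ = 2 * ∫ a, max (g a - f n a) 0 ∂μ := fun n ↦ by
    have h_pt : ∀ a, ‖f n a - g a‖ = (f n a - g a) + 2 * max (g a - f n a) 0 := fun a ↦ by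
      rw [Real.norm_eq_abs]
      rcases le_total (f n a) (g a) with h | h
      · rw [abs_of_nonpos (by linarith), max_eq_left (by linarith)]; ring
      · rw [abs_of_nonneg (by linarith), max_eq_right (by linarith)]; ring
    have h_diff : Integrable (fun a ↦ f n a - g a) μ := (hf n).sub hg
    have h_neg_part : Integrable (fun a ↦ 2 * max (g a - f n a) 0) μ :=
      (hg.sub (hf n)).pos_part.const_mul 2
    simp_rw [h_pt]
    rw [integral_add h_diff h_neg_part, integral_sub (hf n) hg, h_integral, integral_const_mul,
      sub_self, zero_add]
  have h_norm : Tendsto (fun n ↦ ∫ a, ‖f n a - g a‖ ∂μ) atTop (𝓝 0) := by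
    simp_rw [h_abs]
    simpa using h_neg.const_mul 2
  have h_enorm := ENNReal.tendsto_ofReal h_norm
  rw [ENNReal.ofReal_zero] at h_enorm
  exact h_enorm.congr fun n ↦ ofReal_integral_norm_eq_lintegral_enorm ((hf n).sub hg)

end Scheffe

theorem ae_eq_of_setIntegral_Icc_zero_eq {f g : ℝ → ℝ} (hf : IntegrableOn f (Icc 0 1))
    (hg : IntegrableOn g (Icc 0 1)) (hf_nonneg : 0 ≤ᵐ[volume.restrict (Icc 0 1)] f)
    (hg_nonneg : 0 ≤ᵐ[volume.restrict (Icc 0 1)] g)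
    (h : ∀ a ∈ Icc (0:ℝ) 1, ∫ t in Icc 0 a, f t = ∫ t in Icc 0 a, g t) :
    f =ᵐ[volume.restrict (Icc 0 1)] g := by
  set μ := volume.restrict (Icc (0:ℝ) 1)
  have h_Iic : ∀ a, ∫ t in Iic a, f t ∂μ = ∫ t in Iic a, g t ∂μ := fun a ↦ by
    have h_inter : Iic a ∩ Icc 0 1 = Icc 0 (min a 1) := by
      ext t; simp [and_left_comm]
    simp only [μ, Measure.restrict_restrict measurableSet_Iic, h_inter]
    rcases lt_or_ge a 0 with ha | ha
    · simp [Icc_eq_empty_of_lt (lt_of_le_of_lt (min_le_left a 1) ha)]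
    · exact h _ ⟨le_min ha zero_le_one, min_le_right _ _⟩
  have : IsFiniteMeasure (μ.withDensity fun t ↦ ENNReal.ofReal (f t)) :=
    isFiniteMeasure_withDensity_ofReal hf.hasFiniteIntegral
  have h_eq : (μ.withDensity fun t ↦ ENNReal.ofReal (f t)) =
      μ.withDensity fun t ↦ ENNReal.ofReal (g t) := by
    refine Measure.ext_of_Iic _ _ fun a ↦ ?_
    have hf' : Integrable f (μ.restrict (Iic a)) := Integrable.restrict hf
    have hg' : Integrable g (μ.restrict (Iic a)) := Integrable.restrict hg
    rw [withDensity_apply _ measurableSet_Iic, withDensity_apply _ measurableSet_Iic,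
      ← ofReal_integral_eq_lintegral_ofReal hf' (ae_restrict_of_ae hf_nonneg),
      ← ofReal_integral_eq_lintegral_ofReal hg' (ae_restrict_of_ae hg_nonneg), h_Iic]
  rw [withDensity_eq_iff_of_sigmaFinite hf.aemeasurable.ennreal_ofReal
    hg.aemeasurable.ennreal_ofReal] at h_eq
  filter_upwards [h_eq, hf_nonneg, hg_nonneg] with t ht hft hgt
  exact (ENNReal.ofReal_eq_ofReal_iff hft hgt).1 ht

def HasDensity (C k : ℝ → ℝ → ℝ) : Prop :=
  ∀ x ∈ Icc (0:ℝ) 1, ∀ y ∈ Icc (0:ℝ) 1, C x y = ∫ p in Icc (0:ℝ) x ×ˢ Icc (0:ℝ) y, k p.1 p.2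

namespace HasDensity

variable {C k : ℝ → ℝ → ℝ}

theorem integrable (hC : IsCopula C) (h : HasDensity C k) :
    Integrable (Function.uncurry k)
      ((volume.restrict (Icc (0:ℝ) 1)).prod (volume.restrict (Icc (0:ℝ) 1))) := by
  have h_one : (1:ℝ) ∈ Icc (0:ℝ) 1 := right_mem_Icc.2 zero_le_one
  have h_mass : ∫ p in Icc (0:ℝ) 1 ×ˢ Icc (0:ℝ) 1, k p.1 p.2 = 1 := by
    rw [← h 1 h_one 1 h_one, (hC.1 1 h_one).2.2.1]
  change ∫ p in Icc (0:ℝ) 1 ×ˢ Icc (0:ℝ) 1, Function.uncurry k p = 1 at h_mass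
  rw [Measure.prod_restrict, ← Measure.volume_eq_prod]
  by_contra h_not
  rw [integral_undef h_not] at h_mass
  exact zero_ne_one h_mass

theorem setIntegral_integral_slice (hC : IsCopula C) (h : HasDensity C k) {a : ℝ}
    (ha : a ∈ Icc (0:ℝ) 1) : ∫ t in Icc 0 a, ∫ s in Icc 0 1, k t s = a := by
  have h_int : IntegrableOn (Function.uncurry k) (Icc 0 a ×ˢ Icc 0 1) (volume.prod volume) := by
    have := h.integrable hC
    rw [Measure.prod_restrict] at this
    exact IntegrableOn.mono_set this (prod_mono (Icc_subset_Icc le_rfl ha.2) le_rfl)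
  have h_C := h a ha 1 (right_mem_Icc.2 zero_le_one)
  rw [(hC.1 a ha).2.2.1, Measure.volume_eq_prod] at h_C
  exact (setIntegral_prod (Function.uncurry k) h_int).symm.trans h_C.symm

theorem ae_integral_slice_eq_one (hC : IsCopula C) (h : HasDensity C k)
    (hk : ∀ x y, 0 ≤ k x y) :
    ∀ᵐ x ∂volume.restrict (Icc (0:ℝ) 1), ∫ s in Icc 0 1, k x s = 1 := by
  refine ae_eq_of_setIntegral_Icc_zero_eq (h.integrable hC).integral_prod_left
    (integrableOn_const (by simp)) (ae_of_all _ fun t ↦ integral_nonneg (hk t))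
    (ae_of_all _ fun _ ↦ zero_le_one) fun a ha ↦ ?_
  simp [h.setIntegral_integral_slice hC ha, ha.1]

end HasDensity

theorem stmt19_general (C : ℝ → ℝ → ℝ) (Cseq : ℕ → ℝ → ℝ → ℝ)
    (k : ℝ → ℝ → ℝ) (kseq : ℕ → ℝ → ℝ → ℝ)
    (hC : IsCopula C) (hCseq : ∀ n, IsCopula (Cseq n))
    (hk_nonneg : ∀ x y, 0 ≤ k x y)
    (hkseq_nonneg : ∀ n x y, 0 ≤ kseq n x y)
    (hdens : ∀ x ∈ Set.Icc (0:ℝ) 1, ∀ y ∈ Set.Icc (0:ℝ) 1,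
      C x y = ∫ p in Set.Icc (0:ℝ) x ×ˢ Set.Icc (0:ℝ) y, k p.1 p.2)
    (hdensseq : ∀ n, ∀ x ∈ Set.Icc (0:ℝ) 1, ∀ y ∈ Set.Icc (0:ℝ) 1,
      Cseq n x y = ∫ p in Set.Icc (0:ℝ) x ×ˢ Set.Icc (0:ℝ) y, kseq n p.1 p.2)
    (hae : ∀ᵐ p ∂(volume.restrict (Set.Icc (0:ℝ) 1 ×ˢ Set.Icc (0:ℝ) 1)),
      Filter.Tendsto (fun n => kseq n (p : ℝ × ℝ).1 p.2) Filter.atTop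
        (nhds (k (p : ℝ × ℝ).1 p.2))) :
    (∀ᵐ x ∂(volume.restrict (Set.Icc (0:ℝ) 1)), ∀ y ∈ Set.Icc (0:ℝ) 1,
      Filter.Tendsto (fun n => ∫ s in Set.Icc (0:ℝ) y, kseq n x s) Filter.atTop
        (nhds (∫ s in Set.Icc (0:ℝ) y, k x s))) ∧
    WeakCondConv (fun n x y => ∫ s in Set.Icc (0:ℝ) y, kseq n x s)
      (fun x y => ∫ s in Set.Icc (0:ℝ) y, k x s) := by
  have hk := HasDensity.integrable hC hdens
  have hkseq n := HasDensity.integrable (hCseq n) (hdensseq n)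
  have h_slices : ∀ᵐ x ∂volume.restrict (Icc (0:ℝ) 1), ∀ᵐ s ∂volume.restrict (Icc (0:ℝ) 1),
      Tendsto (fun n ↦ kseq n x s) atTop (𝓝 (k x s)) := by
    rw [Measure.volume_eq_prod, ← Measure.prod_restrict] at hae
    exact Measure.ae_ae_of_ae_prod hae
  have h_conv : ∀ᵐ x ∂volume.restrict (Icc (0:ℝ) 1), ∀ y ∈ Icc (0:ℝ) 1,
      Tendsto (fun n ↦ ∫ s in Icc 0 y, kseq n x s) atTop (𝓝 (∫ s in Icc 0 y, k x s)) := by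
    filter_upwards [hk.prod_right_ae, ae_all_iff.2 fun n ↦ (hkseq n).prod_right_ae,
      HasDensity.ae_integral_slice_eq_one hC hdens hk_nonneg,
      ae_all_iff.2 fun n ↦ HasDensity.ae_integral_slice_eq_one (hCseq n) (hdensseq n)
        (hkseq_nonneg n), h_slices] with x hkx hkseqx hkx_one hkseqx_one hx y hy
    have h_L1 := tendsto_lintegral_enorm_sub_of_tendsto_ae hkseqx hkx
      (fun n ↦ ae_of_all _ (hkseq_nonneg n x)) (fun n ↦ (hkseqx_one n).trans hkx_one.symm) hx
    simpa [Measure.restrict_restrict measurableSet_Icc,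
      inter_eq_left.2 (Icc_subset_Icc le_rfl hy.2)] using
      tendsto_setIntegral_of_L1 _ hkx.aestronglyMeasurable (.of_forall hkseqx) h_L1 (Icc 0 y)
  exact ⟨h_conv, by filter_upwards [h_conv] with x hx y hy _ using hx y hy⟩

/-- Let `C, C₁, C₂, …` be absolutely continuous bivariate copulas with
densities `k, k₁, k₂, …` w.r.t. two-dimensional Lebesgue measure on `[0,1]²`, and suppose
`k_n → k` λ₂-almost everywhere. Then `(C_n)` converges weakly conditional to `C`:
for λ-a.e. `x ∈ [0,1]` and every `y ∈ [0,1]`,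
`K_{C_n}(x,[0,y]) = ∫_{[0,y]} k_n(x,s) dλ(s) → ∫_{[0,y]} k(x,s) dλ(s) = K_C(x,[0,y])`. -/
theorem stmt19 (C : ℝ → ℝ → ℝ) (Cseq : ℕ → ℝ → ℝ → ℝ)
    (k : ℝ → ℝ → ℝ) (kseq : ℕ → ℝ → ℝ → ℝ)
    (hC : IsCopula C) (hCseq : ∀ n, IsCopula (Cseq n))
    (hk_meas : Measurable (Function.uncurry k))
    (hkseq_meas : ∀ n, Measurable (Function.uncurry (kseq n)))
    (hk_nonneg : ∀ x y, 0 ≤ k x y)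
    (hkseq_nonneg : ∀ n x y, 0 ≤ kseq n x y)
    (hdens : ∀ x ∈ Set.Icc (0:ℝ) 1, ∀ y ∈ Set.Icc (0:ℝ) 1,
      C x y = ∫ p in Set.Icc (0:ℝ) x ×ˢ Set.Icc (0:ℝ) y, k p.1 p.2)
    (hdensseq : ∀ n, ∀ x ∈ Set.Icc (0:ℝ) 1, ∀ y ∈ Set.Icc (0:ℝ) 1,
      Cseq n x y = ∫ p in Set.Icc (0:ℝ) x ×ˢ Set.Icc (0:ℝ) y, kseq n p.1 p.2)
    (hae : ∀ᵐ p ∂(volume.restrict (Set.Icc (0:ℝ) 1 ×ˢ Set.Icc (0:ℝ) 1)),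
      Filter.Tendsto (fun n => kseq n (p : ℝ × ℝ).1 p.2) Filter.atTop
        (nhds (k (p : ℝ × ℝ).1 p.2))) :
    (∀ᵐ x ∂(volume.restrict (Set.Icc (0:ℝ) 1)), ∀ y ∈ Set.Icc (0:ℝ) 1,
      Filter.Tendsto (fun n => ∫ s in Set.Icc (0:ℝ) y, kseq n x s) Filter.atTop
        (nhds (∫ s in Set.Icc (0:ℝ) y, k x s))) ∧
    WeakCondConv (fun n x y => ∫ s in Set.Icc (0:ℝ) y, kseq n x s)
      (fun x y => ∫ s in Set.Icc (0:ℝ) y, k x s) :=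
  stmt19_general C Cseq k kseq hC hCseq hk_nonneg hkseq_nonneg hdens hdensseq hae
end
end
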